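/- arXiv:1908.10665 — 6 statements merged into one kernel-verified Lean document; each statement's English description precedes it below -/
import Mathlib

section
/- Let S = M[G;I,Λ;P] be a normalised Rees matrix semigroup over a countable group G with countable index sets I, Λ, which is homogeneous as a completely simple semigroup, and suppose the set of entries G^P is finite. Then the induced edge-coloured bipartite graph Γ(S) — the complete bipartite graph with left set Λ' = Λ∖{1_Λ}, right set I' = I∖{1_I}, and edge (λ,i) coloured by P(λ,i) — is homogeneous as an edge-coloured bipartite graph. -/
section CSDefs

variable {S : Type*}

/-- Closure of a subset under a binary operation `op` and a unary operation `star`. -/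
inductive CSClosure (op : S → S → S) (star : S → S) (X : Set S) : S → Prop
  | base {x : S} : x ∈ X → CSClosure op star X x
  | mul {x y : S} : CSClosure op star X x → CSClosure op star X y →
      CSClosure op star X (op x y)
  | inv {x : S} : CSClosure op star X x → CSClosure op star X (star x)

/-- Homogeneity as a completely simple semigroup, for the completely simple semigroup with
carrier `S`, multiplication `op` and unary operation `star` (inversion in the maximal
subgroup): every multiplication-preserving bijection between finitely generated
`(op, star)`-closed subsemigroups extends to an automorphism of `S`. -/
def IsCSHomogeneous (op : S → S → S) (star : S → S) : Prop :=
  ∀ (X Y : Finset S) (φ : S → S),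
    Set.BijOn φ {s | CSClosure op star (X : Set S) s} {s | CSClosure op star (Y : Set S) s} →
    (∀ x y : S, CSClosure op star (X : Set S) x → CSClosure op star (X : Set S) y →
      φ (op x y) = op (φ x) (φ y)) →
    ∃ Φ : S → S, Function.Bijective Φ ∧
      (∀ x y : S, Φ (op x y) = op (Φ x) (Φ y)) ∧
      ∀ x : S, CSClosure op star (X : Set S) x → Φ x = φ x

end CSDefs

/-- A countable group is homogeneous if every isomorphism between finitely generated
subgroups extends to an automorphism. -/
def IsHomogeneousGroup (G : Type*) [Group G] : Prop :=
  ∀ (A B : Subgroup G), A.FG → B.FG → ∀ e : A ≃* B,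
    ∃ Φ : G ≃* G, ∀ a : A, Φ (a : G) = ((e a : B) : G)

section Rees

variable {G H I Λ J M : Type*} [Group G] [Group H]

/-- Multiplication of the Rees matrix semigroup `M[G;I,Λ;P]`. -/
def reesMul (P : Λ → I → G) (x y : I × G × Λ) : I × G × Λ :=
  (x.1, x.2.1 * P x.2.2 y.1 * y.2.1, y.2.2)

/-- The unary operation on `M[G;I,Λ;P]` sending an element to its inverse in its
maximal subgroup. -/
def reesInv (P : Λ → I → G) (x : I × G × Λ) : I × G × Λ :=
  (x.1, (P x.2.2 x.1)⁻¹ * x.2.1⁻¹ * (P x.2.2 x.1)⁻¹, x.2.2)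

/-- The set `G^P` of entries of the sandwich matrix `P`. -/
def reesEntries (P : Λ → I → G) : Set G := {g | ∃ l i, P l i = g}

/-- The sandwich matrix `P` viewed as a matrix over the subgroup `⟨G^P⟩` generated by its
entries; the Rees matrix semigroup over it is the idempotent-generated subsemigroup
`⟨E(S)⟩ = I × ⟨G^P⟩ × Λ` of `M[G;I,Λ;P]` (for normalised `P`). -/
def reesEntriesMatrix (P : Λ → I → G) : Λ → I → ↥(Subgroup.closure (reesEntries P)) :=
  fun l i => ⟨P l i, Subgroup.subset_closure ⟨l, i, rfl⟩⟩

/-- The map `[θ, ψ, u, v]` between Rees matrix semigroups. -/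
def reesMap (θ : G →* H) (ψI : I → J) (ψΛ : Λ → M) (u : I → H) (v : Λ → H) :
    I × G × Λ → J × H × M :=
  fun x => (ψI x.1, u x.1 * θ x.2.1 * v x.2.2, ψΛ x.2.2)

end Rees

/-- The set `A` forms a characteristic subgroup of `G`: it is a subgroup (contains the
identity and is closed under products and inverses) and is invariant under every
automorphism of `G`. -/
def IsCharacteristicSubgroupSet {G : Type*} [Group G] (A : Set G) : Prop :=
  1 ∈ A ∧ (∀ a ∈ A, ∀ b ∈ A, a * b ∈ A) ∧ (∀ a ∈ A, a⁻¹ ∈ A) ∧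
    ∀ θ : G ≃* G, θ '' A = A

/-- Homogeneity of a complete edge-coloured bipartite graph with left set `L`,
right set `R` and colouring function `F`. -/
def IsHomogeneousBipartite {L R C : Type*} (F : L → R → C) : Prop :=
  ∀ (A : Finset L) (B : Finset R) (α : L → L) (β : R → R),
    Set.InjOn α ↑A → Set.InjOn β ↑B →
    (∀ a ∈ A, ∀ b ∈ B, F (α a) (β b) = F a b) →
    ∃ (α' : Equiv.Perm L) (β' : Equiv.Perm R),
      (∀ a ∈ A, α' a = α a) ∧ (∀ b ∈ B, β' b = β b) ∧
      ∀ (x : L) (y : R), F (α' x) (β' y) = F x y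

/-!
Colour-preserving partial maps `α` on `Λ∖{1_Λ}` and `β` on `I∖{1_I}`, extended by fixing
`1_Λ` and `1_I`, give a partial isomorphism `(i, g, λ) ↦ (β i, g, α λ)` of `S` on the
completely simple subsemigroup generated by the finitely many elements `(1_I, g, 1_Λ)`,
`g ∈ G^P`, together with `(i, 1, 1_Λ)` and `(1_I, 1, λ)` for `i`, `λ` in the domains of `β`
and `α`. Homogeneity extends it to an automorphism `Φ` of `S`. Since `Φ` preserves the
R- and L-classes as partitions, it permutes `I` and `Λ`; these permutations extend `β` and `α`,
and they preserve colours because `(1_I, 1, λ)(i, 1, 1_Λ) = (1_I, P(λ,i), 1_Λ)` is fixed by `Φ`.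
-/

namespace CSClosure

variable {S : Type*} {op : S → S → S} {star : S → S} {X : Set S}

theorem subset {T : Set S} (hXT : X ⊆ T) (hop : ∀ x ∈ T, ∀ y ∈ T, op x y ∈ T)
    (hstar : ∀ x ∈ T, star x ∈ T) {x : S} (hx : CSClosure op star X x) : x ∈ T := by
  induction hx with
  | base h => exact hXT h
  | mul _ _ ihx ihy => exact hop _ ihx _ ihy
  | inv _ ih => exact hstar _ ih

theorem bijOn_image {φ : S → S}
    (hop : ∀ x y, CSClosure op star X x → CSClosure op star X y → φ (op x y) = op (φ x) (φ y))
    (hstar : ∀ x, CSClosure op star X x → φ (star x) = star (φ x))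
    (hinj : Set.InjOn φ {x | CSClosure op star X x}) :
    Set.BijOn φ {x | CSClosure op star X x} {y | CSClosure op star (φ '' X) y} := by
  refine ⟨fun x hx => ?_, hinj, fun y hy => ?_⟩
  · induction hx with
    | base h => exact base (Set.mem_image_of_mem φ h)
    | mul hx hy ihx ihy => exact hop _ _ hx hy ▸ mul ihx ihy
    | inv hx ih => exact hstar _ hx ▸ inv ih
  · induction hy with
    | base h =>
      obtain ⟨x, hx, rfl⟩ := h
      exact ⟨x, base hx, rfl⟩
    | mul _ _ ihx ihy =>
      obtain ⟨x, hx, rfl⟩ := ihx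
      obtain ⟨y, hy, rfl⟩ := ihy
      exact ⟨op x y, mul hx hy, hop x y hx hy⟩
    | inv _ ih =>
      obtain ⟨x, hx, rfl⟩ := ih
      exact ⟨star x, inv hx, hstar x hx⟩

end CSClosure

theorem Equiv.symm_apply_op {α : Type*} {op : α → α → α} (e : α ≃ α)
    (he : ∀ x y, e (op x y) = op (e x) (e y)) (x y : α) :
    e.symm (op x y) = op (e.symm x) (e.symm y) :=
  e.injective (by rw [he, e.apply_symm_apply, e.apply_symm_apply, e.apply_symm_apply])

section ExtendFixing

variable {X : Type*} (x₀ : X) (f : {x // x ≠ x₀} → {x // x ≠ x₀})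

open Classical in
noncomputable def extendFixing (x : X) : X :=
  if h : x = x₀ then x₀ else f ⟨x, h⟩

@[simp]
theorem extendFixing_self : extendFixing x₀ f x₀ = x₀ := dif_pos rfl

@[simp]
theorem extendFixing_coe (a : {x // x ≠ x₀}) : extendFixing x₀ f a = f a := dif_neg a.2

theorem injOn_extendFixing {A : Set {x // x ≠ x₀}} (hf : Set.InjOn f A) :
    Set.InjOn (extendFixing x₀ f) (insert x₀ (Subtype.val '' A)) := by
  rintro _ (rfl | ⟨a, ha, rfl⟩) _ (rfl | ⟨b, hb, rfl⟩) h
  · rfl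
  · exact absurd h.symm (by simpa using (f b).2)
  · exact absurd h (by simpa using (f a).2)
  · simp only [extendFixing_coe] at h
    exact congrArg Subtype.val (hf ha hb (Subtype.ext h))

end ExtendFixing

section Rees

variable {G I Λ : Type*} [Group G] {P : Λ → I → G}

theorem exists_reesMul_eq_of_fst_eq {x y : I × G × Λ} (h : y.1 = x.1) :
    ∃ z, reesMul P y z = x :=
  ⟨(x.1, (y.2.1 * P y.2.2 x.1)⁻¹ * x.2.1, x.2.2), by simp [reesMul, h, mul_assoc]⟩

theorem exists_reesMul_eq_of_snd_snd_eq {x y : I × G × Λ} (h : y.2.2 = x.2.2) :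
    ∃ z, reesMul P z y = x :=
  ⟨(x.1, x.2.1 * (P x.2.2 y.1 * y.2.1)⁻¹, x.2.2), by simp [reesMul, h, mul_assoc]⟩

theorem reesMul_self_eq_self_iff {x : I × G × Λ} :
    reesMul P x x = x ↔ x.2.1 = (P x.2.2 x.1)⁻¹ := by
  obtain ⟨i, g, l⟩ := x
  simp [reesMul, mul_assoc, mul_eq_one_iff_inv_eq, eq_comm]

section Relabel

variable (ψI : I → I) (ψΛ : Λ → Λ)

theorem relabel_reesMul {x y : I × G × Λ} (h : P (ψΛ x.2.2) (ψI y.1) = P x.2.2 y.1) :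
    (fun z : I × G × Λ => (ψI z.1, z.2.1, ψΛ z.2.2)) (reesMul P x y) =
      reesMul P (ψI x.1, x.2.1, ψΛ x.2.2) (ψI y.1, y.2.1, ψΛ y.2.2) := by
  simp [reesMul, h]

theorem relabel_reesInv {x : I × G × Λ} (h : P (ψΛ x.2.2) (ψI x.1) = P x.2.2 x.1) :
    (fun z : I × G × Λ => (ψI z.1, z.2.1, ψΛ z.2.2)) (reesInv P x) =
      reesInv P (ψI x.1, x.2.1, ψΛ x.2.2) := by
  simp [reesInv, h]

end Relabel

theorem sandwich_extendFixing {iI : I} {lL : Λ}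
    (hrow : ∀ j : I, P lL j = 1) (hcol : ∀ m : Λ, P m iI = 1)
    {A : Set {l : Λ // l ≠ lL}} {B : Set {i : I // i ≠ iI}}
    {α : {l : Λ // l ≠ lL} → {l : Λ // l ≠ lL}} {β : {i : I // i ≠ iI} → {i : I // i ≠ iI}}
    (hF : ∀ a ∈ A, ∀ b ∈ B, P (α a) (β b) = P a b) :
    ∀ l ∈ insert lL (Subtype.val '' A), ∀ i ∈ insert iI (Subtype.val '' B),
      P (extendFixing lL α l) (extendFixing iI β i) = P l i := by
  rintro _ (rfl | ⟨a, ha, rfl⟩) _ (rfl | ⟨b, hb, rfl⟩)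
  · simp [hrow]
  · simp [hrow]
  · simp [hcol]
  · simpa using hF a ha b hb

section Automorphism

variable {e : (I × G × Λ) ≃ (I × G × Λ)}
  (he : ∀ x y, e (reesMul P x y) = reesMul P (e x) (e y))
include he

theorem fst_apply_eq_of_fst_eq {x y : I × G × Λ} (h : x.1 = y.1) : (e x).1 = (e y).1 := by
  obtain ⟨z, rfl⟩ := exists_reesMul_eq_of_fst_eq (P := P) h
  rw [he]
  rfl

theorem snd_snd_apply_eq_of_snd_snd_eq {x y : I × G × Λ} (h : x.2.2 = y.2.2) :
    (e x).2.2 = (e y).2.2 := by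
  obtain ⟨z, rfl⟩ := exists_reesMul_eq_of_snd_snd_eq (P := P) h
  rw [he]
  rfl

def rClassPerm (l₀ : Λ) : Equiv.Perm I where
  toFun i := (e (i, 1, l₀)).1
  invFun i := (e.symm (i, 1, l₀)).1
  left_inv i := by
    simp only
    rw [fst_apply_eq_of_fst_eq (e.symm_apply_op he) (x := (_, 1, l₀)) (y := e (i, 1, l₀)) rfl,
      e.symm_apply_apply]
  right_inv i := by
    simp only
    rw [fst_apply_eq_of_fst_eq he (x := (_, 1, l₀)) (y := e.symm (i, 1, l₀)) rfl,
      e.apply_symm_apply]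

def lClassPerm (i₀ : I) : Equiv.Perm Λ where
  toFun l := (e (i₀, 1, l)).2.2
  invFun l := (e.symm (i₀, 1, l)).2.2
  left_inv l := by
    simp only
    rw [snd_snd_apply_eq_of_snd_snd_eq (e.symm_apply_op he) (x := (i₀, 1, _))
      (y := e (i₀, 1, l)) rfl, e.symm_apply_apply]
  right_inv l := by
    simp only
    rw [snd_snd_apply_eq_of_snd_snd_eq he (x := (i₀, 1, _)) (y := e.symm (i₀, 1, l)) rfl,
      e.apply_symm_apply]

theorem fst_apply_eq_rClassPerm (l₀ : Λ) (x : I × G × Λ) : (e x).1 = rClassPerm he l₀ x.1 :=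
  fst_apply_eq_of_fst_eq he rfl

theorem snd_snd_apply_eq_lClassPerm (i₀ : I) (x : I × G × Λ) :
    (e x).2.2 = lClassPerm he i₀ x.2.2 :=
  snd_snd_apply_eq_of_snd_snd_eq he rfl

theorem apply_idempotent {x : I × G × Λ} (hx : reesMul P x x = x) (i₀ : I) (l₀ : Λ) :
    e x = (rClassPerm he l₀ x.1, (P (lClassPerm he i₀ x.2.2) (rClassPerm he l₀ x.1))⁻¹,
      lClassPerm he i₀ x.2.2) := by
  have hex : reesMul P (e x) (e x) = e x := by rw [← he, hx]
  rw [← fst_apply_eq_rClassPerm he, ← snd_snd_apply_eq_lClassPerm he,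
    ← reesMul_self_eq_self_iff.1 hex]

theorem sandwich_lClassPerm_rClassPerm {iI : I} {lL : Λ}
    (hrow : ∀ j : I, P lL j = 1) (hcol : ∀ m : Λ, P m iI = 1)
    (hfix : ∀ g ∈ reesEntries P, e (iI, g, lL) = (iI, g, lL)) (l : Λ) (i : I) :
    P (lClassPerm he iI l) (rClassPerm he lL i) = P l i := by
  have hbase := hfix 1 ⟨lL, iI, hrow iI⟩
  have hI : rClassPerm he lL iI = iI := congrArg Prod.fst hbase
  have hΛ : lClassPerm he iI lL = lL := congrArg (·.2.2) hbase
  have hl : e (iI, 1, l) = (iI, 1, lClassPerm he iI l) := by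
    rw [apply_idempotent he (by simp [reesMul, hcol]) iI lL]
    simp [hI, hcol]
  have hi : e (i, 1, lL) = (rClassPerm he lL i, 1, lL) := by
    rw [apply_idempotent he (by simp [reesMul, hrow]) iI lL]
    simp [hΛ, hrow]
  have hprod : reesMul P (iI, 1, l) (i, 1, lL) = (iI, P l i, lL) := by simp [reesMul]
  have := he (iI, 1, l) (i, 1, lL)
  rw [hprod, hfix _ ⟨l, i, rfl⟩, hl, hi] at this
  simpa [reesMul] using (congrArg (·.2.1) this).symm

end Automorphism

end Rees

theorem exists_reesAut_extending {G I Λ : Type*} [Group G] {P : Λ → I → G} {iI : I} {lL : Λ}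
    (hrow : ∀ j : I, P lL j = 1) (hcol : ∀ m : Λ, P m iI = 1)
    (hhom : IsCSHomogeneous (reesMul P) (reesInv P)) (hfin : (reesEntries P).Finite)
    {A : Finset {l : Λ // l ≠ lL}} {B : Finset {i : I // i ≠ iI}}
    {α : {l : Λ // l ≠ lL} → {l : Λ // l ≠ lL}} {β : {i : I // i ≠ iI} → {i : I // i ≠ iI}}
    (hα : Set.InjOn α A) (hβ : Set.InjOn β B) (hF : ∀ a ∈ A, ∀ b ∈ B, P (α a) (β b) = P a b) :
    ∃ e : (I × G × Λ) ≃ (I × G × Λ), (∀ x y, e (reesMul P x y) = reesMul P (e x) (e y)) ∧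
      (∀ g ∈ reesEntries P, e (iI, g, lL) = (iI, g, lL)) ∧
      (∀ a ∈ A, e (iI, 1, a) = (iI, 1, (α a : Λ))) ∧
      ∀ b ∈ B, e (b, 1, lL) = ((β b : I), 1, lL) := by
  classical
  set TI := insert iI (Subtype.val '' (B : Set {i : I // i ≠ iI}))
  set TΛ := insert lL (Subtype.val '' (A : Set {l : Λ // l ≠ lL}))
  set T : Set (I × G × Λ) := TI ×ˢ (Set.univ ×ˢ TΛ)
  set φ : I × G × Λ → I × G × Λ := fun x => (extendFixing iI β x.1, x.2.1, extendFixing lL α x.2.2)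
  have hcolour := sandwich_extendFixing hrow hcol hF
  let X : Finset (I × G × Λ) := (hfin.toFinset.image fun g => (iI, g, lL)) ∪
    (B.image fun b => (b.1, 1, lL)) ∪ A.image fun a => (iI, 1, a.1)
  have hXT : (X : Set (I × G × Λ)) ⊆ T := by
    intro x hx
    simp only [X, Finset.mem_coe, Finset.mem_union, Finset.mem_image] at hx
    rcases hx with (⟨g, -, rfl⟩ | ⟨b, hb, rfl⟩) | ⟨a, ha, rfl⟩
    · exact ⟨.inl rfl, trivial, .inl rfl⟩
    · exact ⟨.inr ⟨b, hb, rfl⟩, trivial, .inl rfl⟩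
    · exact ⟨.inl rfl, trivial, .inr ⟨a, ha, rfl⟩⟩
  have hT : ∀ x, CSClosure (reesMul P) (reesInv P) X x → x ∈ T := fun x =>
    CSClosure.subset (op := reesMul P) (star := reesInv P) hXT
      (fun _ hx _ hy => ⟨hx.1, trivial, hy.2.2⟩) (fun _ hx => hx)
  have hφ : ∀ x y, CSClosure (reesMul P) (reesInv P) X x → CSClosure (reesMul P) (reesInv P) X y →
      φ (reesMul P x y) = reesMul P (φ x) (φ y) := fun x y hx hy =>
    relabel_reesMul _ _ (hcolour _ (hT x hx).2.2 _ (hT y hy).1)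
  have hbij := CSClosure.bijOn_image hφ
    (fun x hx => relabel_reesInv _ _ (hcolour _ (hT x hx).2.2 _ (hT x hx).1))
    (((injOn_extendFixing iI β hβ).prodMap
      ((Set.injOn_id Set.univ).prodMap (injOn_extendFixing lL α hα))).mono hT)
  obtain ⟨Φ, hΦ, hΦmul, hΦφ⟩ := hhom X (X.image φ) φ (by rwa [Finset.coe_image]) hφ
  have hΦX : ∀ x ∈ X, Φ x = φ x := fun x hx => hΦφ x (.base hx)
  refine ⟨Equiv.ofBijective Φ hΦ, hΦmul, fun g hg => ?_, fun a ha => ?_, fun b hb => ?_⟩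
  · simpa [φ] using hΦX _ (Finset.mem_union_left _ (Finset.mem_union_left _
      (Finset.mem_image_of_mem _ (hfin.mem_toFinset.2 hg))))
  · simpa [φ] using hΦX _ (Finset.mem_union_right _ (Finset.mem_image_of_mem _ ha))
  · simpa [φ] using hΦX _ (Finset.mem_union_left _ (Finset.mem_union_right _
      (Finset.mem_image_of_mem _ hb)))

theorem rees_homogeneous_induced_graph_general {G I Λ : Type*} [Group G]
    (P : Λ → I → G) (iI : I) (lL : Λ)
    (hrow : ∀ j : I, P lL j = 1) (hcol : ∀ m : Λ, P m iI = 1)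
    (hhom : IsCSHomogeneous (reesMul P) (reesInv P))
    (hfin : (reesEntries P).Finite) :
    IsHomogeneousBipartite
      (fun (l : {l : Λ // l ≠ lL}) (i : {i : I // i ≠ iI}) => P l.1 i.1) := by
  intro A B α β hα hβ hF
  obtain ⟨e, he, hfix, hA, hB⟩ := exists_reesAut_extending hrow hcol hhom hfin hα hβ hF
  have hbase := hfix 1 ⟨lL, iI, hrow iI⟩
  have hI : rClassPerm he lL iI = iI := congrArg Prod.fst hbase
  have hΛ : lClassPerm he iI lL = lL := congrArg (·.2.2) hbase
  refine ⟨(lClassPerm he iI).subtypePerm fun l => (lClassPerm he iI).injective.ne_iff' hΛ,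
    (rClassPerm he lL).subtypePerm fun i => (rClassPerm he lL).injective.ne_iff' hI,
    fun a ha => Subtype.ext (congrArg (·.2.2) (hA a ha)),
    fun b hb => Subtype.ext (congrArg Prod.fst (hB b hb)),
    fun l i => sandwich_lClassPerm_rClassPerm he hrow hcol hfix l i⟩

/-- If a normalised Rees matrix semigroup `S = M[G;I,Λ;P]` (countable
group, countable index sets) is homogeneous as a completely simple semigroup and the
entry set `G^P` is finite, then the induced edge-coloured bipartite graph `Γ(S)` — with
left set `Λ∖{1_Λ}`, right set `I∖{1_I}` and edge `(λ,i)` coloured by `P(λ,i)` — is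
homogeneous as an edge-coloured bipartite graph. -/
theorem rees_homogeneous_induced_graph {G I Λ : Type*} [Group G] [Countable G]
    [Countable I] [Countable Λ]
    (P : Λ → I → G) (iI : I) (lL : Λ)
    (hrow : ∀ j : I, P lL j = 1) (hcol : ∀ m : Λ, P m iI = 1)
    (hhom : IsCSHomogeneous (reesMul P) (reesInv P))
    (hfin : (reesEntries P).Finite) :
    IsHomogeneousBipartite
      (fun (l : {l : Λ // l ≠ lL}) (i : {i : I // i ≠ iI}) => P l.1 i.1) :=
  rees_homogeneous_induced_graph_general P iI lL hrow hcol hhom hfin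
end

section
/- Let S = M[G;I,Λ;P] be a normalised Rees matrix semigroup over a countable group G with countable index sets I, Λ, which is homogeneous as a completely simple semigroup. Then for every i ∈ I with i ≠ 1_I, the set of entries of column i equals G^P, i.e. {P(λ,i) : λ ∈ Λ} = G^P; and for every λ ∈ Λ with λ ≠ 1_Λ, the set of entries of row λ equals G^P, i.e. {P(λ,i) : i ∈ I} = G^P. -/
section CompletelySimple

variable {S T : Type*} {op : S → S → S} {star : S → S} {op' : T → T → T} {star' : T → T}

def IsCSClosed (op : S → S → S) (star : S → S) (A : Set S) : Prop :=
  (∀ x ∈ A, ∀ y ∈ A, op x y ∈ A) ∧ ∀ x ∈ A, star x ∈ A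

theorem CSClosure.mem_of_isCSClosed {X A : Set S} (hA : IsCSClosed op star A) (hXA : X ⊆ A)
    {x : S} (hx : CSClosure op star X x) : x ∈ A := by
  induction hx with
  | base hx => exact hXA hx
  | mul _ _ ihx ihy => exact hA.1 _ ihx _ ihy
  | inv _ ih => exact hA.2 _ ih

theorem CSClosure.apply_of_mapsTo {X A : Set S} (hA : IsCSClosed op star A) (hXA : X ⊆ A)
    {φ : S → S} (hφX : Set.MapsTo φ X X)
    (hφop : ∀ x ∈ A, ∀ y ∈ A, φ (op x y) = op (φ x) (φ y))
    (hφstar : ∀ x ∈ A, φ (star x) = star (φ x))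
    {x : S} (hx : CSClosure op star X x) : CSClosure op star X (φ x) := by
  induction hx with
  | base hx => exact .base (hφX hx)
  | mul hx hy ihx ihy =>
    rw [hφop _ (hx.mem_of_isCSClosed hA hXA) _ (hy.mem_of_isCSClosed hA hXA)]
    exact .mul ihx ihy
  | inv hx ih =>
    rw [hφstar _ (hx.mem_of_isCSClosed hA hXA)]
    exact .inv ih

theorem CSClosure.image_of_antihom {f : S → T} (hop : ∀ x y, f (op x y) = op' (f y) (f x))
    (hstar : ∀ x, f (star x) = star' (f x)) {X : Set S} {x : S}
    (hx : CSClosure op star X x) : CSClosure op' star' (f '' X) (f x) := by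
  induction hx with
  | base hx => exact .base (Set.mem_image_of_mem f hx)
  | mul _ _ ihx ihy => rw [hop]; exact .mul ihy ihx
  | inv _ ih => rw [hstar]; exact .inv ih

theorem CSClosure.symm_image_iff {e : S ≃ T} (hop : ∀ x y, e (op x y) = op' (e y) (e x))
    (hstar : ∀ x, e (star x) = star' (e x)) {X : Set T} {x : S} :
    CSClosure op star (e.symm '' X) x ↔ CSClosure op' star' X (e x) := by
  have hop_symm : ∀ x y, e.symm (op' x y) = op (e.symm y) (e.symm x) := fun x y =>
    e.injective (by simp [hop])
  have hstar_symm : ∀ x, e.symm (star' x) = star (e.symm x) := fun x =>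
    e.injective (by simp [hstar])
  constructor
  · intro hx
    simpa using hx.image_of_antihom hop hstar
  · intro hx
    simpa using hx.image_of_antihom hop_symm hstar_symm

theorem IsCSHomogeneous.of_antiEquiv (e : S ≃ T) (hop : ∀ x y, e (op x y) = op' (e y) (e x))
    (hstar : ∀ x, e (star x) = star' (e x)) (h : IsCSHomogeneous op star) :
    IsCSHomogeneous op' star' := by
  intro X Y φ hφ hφop
  have hop_symm : ∀ x y, e.symm (op' x y) = op (e.symm y) (e.symm x) := fun x y =>
    e.injective (by simp [hop])
  have hmem (Z : Finset T) (x : S) :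
      CSClosure op star (Z.map e.symm.toEmbedding : Set S) x ↔ CSClosure op' star' Z (e x) := by
    rw [Finset.coe_map]
    exact CSClosure.symm_image_iff hop hstar
  have hbij : Set.BijOn (e.symm ∘ φ ∘ e)
      {x | CSClosure op star (X.map e.symm.toEmbedding : Set S) x}
      {x | CSClosure op star (Y.map e.symm.toEmbedding : Set S) x} :=
    (e.symm.bijOn fun y => (hmem Y _).trans (by rw [e.apply_symm_apply]; rfl)).comp
      (hφ.comp (e.bijOn fun x => (hmem X x).symm))
  obtain ⟨Φ, hΦbij, hΦop, hΦext⟩ := h _ _ _ hbij fun x y hx hy => by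
    simp only [Function.comp_apply, hop, hφop _ _ ((hmem X y).1 hy) ((hmem X x).1 hx),
      hop_symm]
  refine ⟨e ∘ Φ ∘ e.symm, e.bijective.comp (hΦbij.comp e.symm.bijective), fun x y => ?_,
    fun x hx => ?_⟩
  · simp [hop_symm, hΦop, hop]
  · have := hΦext (e.symm x) ((hmem X _).2 (by simpa using hx))
    simp [this]

theorem IsCSHomogeneous.exists_hom_extending_involution (h : IsCSHomogeneous op star)
    {A : Set S} (hA : IsCSClosed op star A) (X : Finset S) (hXA : (X : Set S) ⊆ A)
    {φ : S → S} (hφ : Function.Involutive φ) (hφX : Set.MapsTo φ X X)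
    (hφop : ∀ x ∈ A, ∀ y ∈ A, φ (op x y) = op (φ x) (φ y))
    (hφstar : ∀ x ∈ A, φ (star x) = star (φ x)) :
    ∃ Φ : S → S, (∀ x y, Φ (op x y) = op (Φ x) (Φ y)) ∧ ∀ x ∈ X, Φ x = φ x := by
  have hmaps : Set.MapsTo φ {x | CSClosure op star X x} {x | CSClosure op star X x} :=
    fun _ hx => CSClosure.apply_of_mapsTo hA hXA hφX hφop hφstar hx
  have hbij : Set.BijOn φ {x | CSClosure op star X x} {x | CSClosure op star X x} :=
    ⟨hmaps, hφ.injective.injOn, fun y hy => ⟨φ y, hmaps hy, hφ y⟩⟩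
  obtain ⟨Φ, -, hΦop, hΦext⟩ := h X X φ hbij fun x y hx hy =>
    hφop _ (hx.mem_of_isCSClosed hA hXA) _ (hy.mem_of_isCSClosed hA hXA)
  exact ⟨Φ, hΦop, fun x hx => hΦext x (.base hx)⟩

end CompletelySimple

section Rees

variable {G I Λ : Type*} [Group G]

def reesTranspose : I × G × Λ ≃ Λ × G × I where
  toFun x := (x.2.2, x.2.1⁻¹, x.1)
  invFun x := (x.2.2, x.2.1⁻¹, x.1)
  left_inv _ := by simp
  right_inv _ := by simp

def invTranspose (P : Λ → I → G) : I → Λ → G := fun i l => (P l i)⁻¹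

theorem reesTranspose_reesMul (P : Λ → I → G) (x y : I × G × Λ) :
    reesTranspose (reesMul P x y) =
      reesMul (invTranspose P) (reesTranspose y) (reesTranspose x) := by
  simp [reesTranspose, reesMul, invTranspose, mul_assoc]

theorem reesTranspose_reesInv (P : Λ → I → G) (x : I × G × Λ) :
    reesTranspose (reesInv P x) = reesInv (invTranspose P) (reesTranspose x) := by
  simp [reesTranspose, reesInv, invTranspose, mul_assoc]

theorem reesEntries_invTranspose (P : Λ → I → G) :
    reesEntries (invTranspose P) = (reesEntries P)⁻¹ := by
  ext g
  simp only [reesEntries, invTranspose, Set.mem_inv, Set.mem_ofPred_eq, inv_eq_iff_eq_inv]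
  exact exists_comm

theorem column_entries_invTranspose (P : Λ → I → G) (l : Λ) :
    {g | ∃ i, invTranspose P i l = g} = {g | ∃ i, P l i = g}⁻¹ := by
  ext g
  simp [invTranspose, inv_eq_iff_eq_inv]

theorem isCSClosed_setOf_snd_snd_eq (P : Λ → I → G) (l : Λ) :
    IsCSClosed (reesMul P) (reesInv P) {x | x.2.2 = l} :=
  ⟨fun _ _ _ hy => hy, fun _ hx => hx⟩

theorem exists_column_entry_eq_of_hom {P : Λ → I → G} {i₀ i j : I} {μ l₀ : Λ}
    (hcol : ∀ m, P m i₀ = 1) {Φ : I × G × Λ → I × G × Λ}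
    (hΦ : ∀ x y, Φ (reesMul P x y) = reesMul P (Φ x) (Φ y))
    (he : Φ (i₀, 1, l₀) = (i₀, 1, l₀)) (hj : Φ (j, 1, l₀) = (i, 1, l₀))
    (hg : Φ (i₀, P μ j, l₀) = (i₀, P μ j, l₀)) :
    ∃ ν, P ν i = P μ j := by
  set a := Φ (i₀, 1, μ)
  have h1 : reesMul P a (i₀, 1, l₀) = (i₀, 1, l₀) := by
    rw [← he, ← hΦ]
    simp [reesMul, hcol]
  have h2 : reesMul P a (i, 1, l₀) = (i₀, P μ j, l₀) := by
    rw [← hg, ← hj, ← hΦ]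
    simp [reesMul]
  have ha : a.2.1 = 1 := by simpa [reesMul, hcol] using congrArg (·.2.1) h1
  exact ⟨a.2.2, by simpa [reesMul, ha] using congrArg (·.2.1) h2⟩

theorem column_entries_eq_reesEntries {P : Λ → I → G} {i₀ : I} {l₀ : Λ}
    (hrow : ∀ j, P l₀ j = 1) (hcol : ∀ m, P m i₀ = 1)
    (hhom : IsCSHomogeneous (reesMul P) (reesInv P)) {i : I} (hi : i ≠ i₀) :
    {g | ∃ l, P l i = g} = reesEntries P := by
  refine Set.Subset.antisymm (fun _ ⟨l, hl⟩ => ⟨l, i, hl⟩) ?_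
  rintro _ ⟨μ, j, rfl⟩
  obtain rfl | hj := eq_or_ne j i₀
  · exact ⟨l₀, by rw [hrow, hcol]⟩
  classical
  set σ := Equiv.swap i j
  have hσ : σ i₀ = i₀ := Equiv.swap_apply_of_ne_of_ne hi.symm hj.symm
  let X : Finset (I × G × Λ) := {(i₀, 1, l₀), (i, 1, l₀), (j, 1, l₀), (i₀, P μ j, l₀)}
  obtain ⟨Φ, hΦ, hΦX⟩ := hhom.exists_hom_extending_involution
    (isCSClosed_setOf_snd_snd_eq P l₀) X (φ := Prod.map σ id)
    (by intro x hx; simp [X] at hx; rcases hx with rfl | rfl | rfl | rfl <;> rfl)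
    (Function.Involutive.prodMap (Equiv.swap_apply_self i j) fun _ => rfl)
    (by intro x hx; simp [X] at hx ⊢; rcases hx with rfl | rfl | rfl | rfl <;> simp [σ, hσ])
    (fun x (hx : x.2.2 = l₀) y _ => by simp [reesMul, hx, hrow])
    (fun x (hx : x.2.2 = l₀) => by simp [reesInv, hx, hrow])
  exact exists_column_entry_eq_of_hom (l₀ := l₀) hcol hΦ
    ((hΦX _ (by simp [X])).trans (by simp [hσ]))
    ((hΦX _ (by simp [X])).trans (by simp [σ])) ((hΦX _ (by simp [X])).trans (by simp [hσ]))

end Rees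

theorem rees_homogeneous_rows_columns_general {G I Λ : Type*} [Group G]
    (P : Λ → I → G) (iI : I) (lL : Λ)
    (hrow : ∀ j : I, P lL j = 1) (hcol : ∀ m : Λ, P m iI = 1)
    (hhom : IsCSHomogeneous (reesMul P) (reesInv P)) :
    (∀ i : I, i ≠ iI → {g : G | ∃ l : Λ, P l i = g} = reesEntries P) ∧
    (∀ l : Λ, l ≠ lL → {g : G | ∃ i : I, P l i = g} = reesEntries P) := by
  refine ⟨fun i hi => column_entries_eq_reesEntries hrow hcol hhom hi, fun l hl => ?_⟩
  have hhom' :=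
    hhom.of_antiEquiv reesTranspose (reesTranspose_reesMul P) (reesTranspose_reesInv P)
  have h := column_entries_eq_reesEntries (P := invTranspose P) (i₀ := lL) (l₀ := iI)
    (fun j => inv_eq_one.2 (hcol j)) (fun m => inv_eq_one.2 (hrow m)) hhom' hl
  rwa [column_entries_invTranspose, reesEntries_invTranspose, inv_inj] at h

/-- If a normalised Rees matrix semigroup `S = M[G;I,Λ;P]` (countable
group, countable index sets) is homogeneous as a completely simple semigroup, then for
every `i ≠ 1_I` the set of entries of column `i` equals `G^P`, and for every `λ ≠ 1_Λ`
the set of entries of row `λ` equals `G^P`. -/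
theorem rees_homogeneous_rows_columns {G I Λ : Type*} [Group G] [Countable G]
    [Countable I] [Countable Λ]
    (P : Λ → I → G) (iI : I) (lL : Λ)
    (hrow : ∀ j : I, P lL j = 1) (hcol : ∀ m : Λ, P m iI = 1)
    (hhom : IsCSHomogeneous (reesMul P) (reesInv P)) :
    (∀ i : I, i ≠ iI → {g : G | ∃ l : Λ, P l i = g} = reesEntries P) ∧
    (∀ l : Λ, l ≠ lL → {g : G | ∃ i : I, P l i = g} = reesEntries P) :=
  rees_homogeneous_rows_columns_general P iI lL hrow hcol hhom
end

section
/- Let S = M[G;I,Λ;P] be a normalised Rees matrix semigroup over a countable group G with countable index sets I, Λ, which is homogeneous as a completely simple semigroup. Then the set of entries G^P is a characteristic subgroup of G: it contains the identity, is closed under products and inverses, and θ(G^P) = G^P for every automorphism θ of G. -/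
/-! Let `P μ j = 1` and `P l k = 1` for all `j`, `l`. On the row `k` the semigroup is the
direct product of `G` with the right-zero band `Λ`, so for an injective endomorphism `θ` of `G`,
a map `ψ : Λ → Λ` and a row `j`, the map `(k, g, λ) ↦ (j, θ g * (P (ψ λ) j)⁻¹, ψ λ)` is a
homomorphism there, injective where `ψ` is. Homogeneity extends its restriction to
`⟨(k, 1, l), (k, P l i, μ)⟩` to an endomorphism `Φ` of `M[G;I,Λ;P]`. Since
`(k, P l i, μ) = (k, 1, l) (i, 1, μ)` and `Φ` sends the idempotent `(i, 1, μ)` to an idempotent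
`(i', (P m i')⁻¹, m)`, the image `θ (P l i)` is an explicit quotient of entries. Taking `ψ = id`
gives `θ (G^P) ⊆ G^P`, taking `ψ` to swap `l` and `μ` gives inverses, and taking `ψ m = l`
together with the target row `j` gives products.
-/

section CSClosure

variable {S : Type*} {op : S → S → S} {star : S → S} {X T : Set S}

theorem CSClosure.mem_of_closed (hXT : X ⊆ T) (hmul : ∀ x ∈ T, ∀ y ∈ T, op x y ∈ T)
    (hstar : ∀ x ∈ T, star x ∈ T) {x : S} (hx : CSClosure op star X x) : x ∈ T := by
  induction hx with
  | base hx => exact hXT hx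
  | mul _ _ ihx ihy => exact hmul _ ihx _ ihy
  | inv _ ih => exact hstar _ ih

theorem CSClosure.image_eq {φ : S → S}
    (hφ_mul : ∀ x y, CSClosure op star X x → CSClosure op star X y →
      φ (op x y) = op (φ x) (φ y))
    (hφ_star : ∀ x, CSClosure op star X x → φ (star x) = star (φ x)) :
    φ '' {s | CSClosure op star X s} = {s | CSClosure op star (φ '' X) s} := by
  apply Set.Subset.antisymm
  · rintro _ ⟨x, hx, rfl⟩
    induction hx with
    | base hx => exact .base ⟨_, hx, rfl⟩
    | mul hx hy ihx ihy => rw [hφ_mul _ _ hx hy]; exact .mul ihx ihy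
    | inv hx ih => rw [hφ_star _ hx]; exact .inv ih
  · intro y hy
    induction hy with
    | base hy => obtain ⟨x, hx, rfl⟩ := hy; exact ⟨x, .base hx, rfl⟩
    | mul _ _ ihx ihy =>
      obtain ⟨x, hx, rfl⟩ := ihx
      obtain ⟨y, hy, rfl⟩ := ihy
      exact ⟨op x y, .mul hx hy, hφ_mul _ _ hx hy⟩
    | inv _ ih =>
      obtain ⟨x, hx, rfl⟩ := ih
      exact ⟨star x, .inv hx, hφ_star _ hx⟩

theorem IsCSHomogeneous.exists_hom_extending (hhom : IsCSHomogeneous op star) (X : Finset S)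
    (hXT : ↑X ⊆ T) (hmul : ∀ x ∈ T, ∀ y ∈ T, op x y ∈ T) (hstar : ∀ x ∈ T, star x ∈ T)
    {φ : S → S} (hφ_mul : ∀ x ∈ T, ∀ y ∈ T, φ (op x y) = op (φ x) (φ y))
    (hφ_star : ∀ x ∈ T, φ (star x) = star (φ x)) (hφ_inj : Set.InjOn φ T) :
    ∃ Φ : S → S, (∀ x y, Φ (op x y) = op (Φ x) (Φ y)) ∧ ∀ x ∈ X, Φ x = φ x := by
  classical
  have hcl : ∀ {x}, CSClosure op star (X : Set S) x → x ∈ T :=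
    CSClosure.mem_of_closed hXT hmul hstar
  have himage : φ '' {s | CSClosure op star (X : Set S) s} =
      {s | CSClosure op star (X.image φ : Set S) s} := by
    rw [Finset.coe_image]
    exact CSClosure.image_eq (fun x y hx hy => hφ_mul x (hcl hx) y (hcl hy))
      (fun x hx => hφ_star x (hcl hx))
  have hbij : Set.BijOn φ {s | CSClosure op star (X : Set S) s}
      {s | CSClosure op star (X.image φ : Set S) s} :=
    himage ▸ (hφ_inj.mono fun _ hx => hcl hx).bijOn_image
  obtain ⟨Φ, -, hΦ_mul, hΦ_ext⟩ := hhom X (X.image φ) φ hbij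
    (fun x y hx hy => hφ_mul x (hcl hx) y (hcl hy))
  exact ⟨Φ, hΦ_mul, fun x hx => hΦ_ext x (.base hx)⟩

end CSClosure

section Rees

variable {G I Λ : Type*} [Group G] (P : Λ → I → G)

def reesRowMap (θ : G →* G) (ψ : Λ → Λ) (j : I) : I × G × Λ → I × G × Λ :=
  reesMap θ (fun _ => j) ψ 1 (fun l => (P (ψ l) j)⁻¹)

variable {P} {k : I} (θ : G →* G) (ψ : Λ → Λ) (j : I)

theorem reesRowMap_reesMul (hcol : ∀ l, P l k = 1) (x : I × G × Λ) {y : I × G × Λ}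
    (hy : y.1 = k) :
    reesRowMap P θ ψ j (reesMul P x y) =
      reesMul P (reesRowMap P θ ψ j x) (reesRowMap P θ ψ j y) := by
  simp [reesRowMap, reesMap, reesMul, hy, hcol, mul_assoc]

theorem reesRowMap_reesInv (hcol : ∀ l, P l k = 1) {x : I × G × Λ} (hx : x.1 = k) :
    reesRowMap P θ ψ j (reesInv P x) = reesInv P (reesRowMap P θ ψ j x) := by
  simp [reesRowMap, reesMap, reesInv, hx, hcol]

theorem reesRowMap_injOn (hθ : Function.Injective θ) {L : Set Λ} (hψ : Set.InjOn ψ L) :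
    Set.InjOn (reesRowMap P θ ψ j) {x | x.1 = k ∧ x.2.2 ∈ L} := by
  rintro ⟨x₁, g, l⟩ ⟨hx₁, hl⟩ ⟨y₁, h, m⟩ ⟨hy₁, hm⟩ hxy
  simp only [reesRowMap, reesMap, Prod.mk.injEq] at hxy hx₁ hy₁ hl hm
  obtain rfl := hψ hl hm hxy.2.2
  simp [hx₁, hy₁, hθ (by simpa using hxy.2.1)]

theorem exists_eq_of_reesMul_hom {μ : Λ} (hrow : ∀ j, P μ j = 1) (Φ : I × G × Λ → I × G × Λ)
    (hΦ : ∀ x y, Φ (reesMul P x y) = reesMul P (Φ x) (Φ y)) {l : Λ} {i j j' : I} {e c : G}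
    {n m : Λ} (h₁ : Φ (k, 1, l) = (j, e, n)) (h₂ : Φ (k, P l i, μ) = (j', c, m)) :
    ∃ i', c = e * P n i' * (P m i')⁻¹ := by
  rcases hΦi : Φ (i, 1, μ) with ⟨i', g, m'⟩
  have hfactor := hΦ (k, 1, l) (i, 1, μ)
  have hidem := hΦ (i, 1, μ) (i, 1, μ)
  simp only [reesMul, one_mul, mul_one, hrow, hΦi, h₁, h₂, Prod.mk.injEq] at hfactor hidem
  obtain ⟨-, hc, rfl⟩ := hfactor
  have hg : g = (P m i')⁻¹ := by
    refine eq_inv_of_mul_eq_one_right (mul_left_cancel (a := g) ?_)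
    rw [mul_one, ← mul_assoc]
    exact hidem.2.1.symm
  exact ⟨i', by rw [hc, hg]⟩

end Rees

section Homogeneous

variable {G I Λ : Type*} [Group G] {P : Λ → I → G} {k : I} {μ : Λ}

theorem IsCSHomogeneous.exists_reesEntries_eq (hrow : ∀ j, P μ j = 1) (hcol : ∀ l, P l k = 1)
    (hhom : IsCSHomogeneous (reesMul P) (reesInv P)) {θ : G →* G} (hθ : Function.Injective θ)
    {ψ : Λ → Λ} {l : Λ} (hψ : Set.InjOn ψ {l, μ}) (i j : I) :
    ∃ i', θ (P l i) * (P (ψ μ) j)⁻¹ = (P (ψ l) j)⁻¹ * P (ψ l) i' * (P (ψ μ) i')⁻¹ := by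
  classical
  obtain ⟨Φ, hΦ, hΦX⟩ := hhom.exists_hom_extending {(k, 1, l), (k, P l i, μ)}
    (T := {x : I × G × Λ | x.1 = k ∧ x.2.2 ∈ ({l, μ} : Set Λ)}) (by simp [Set.insert_subset_iff])
    (fun _ hx _ hy => ⟨hx.1, hy.2⟩) (fun _ hx => hx)
    (fun x _ _ hy => reesRowMap_reesMul θ ψ j hcol x hy.1)
    (fun _ hx => reesRowMap_reesInv θ ψ j hcol hx.1) (reesRowMap_injOn θ ψ j hθ hψ)
  have h₁ : Φ (k, 1, l) = (j, (P (ψ l) j)⁻¹, ψ l) := by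
    simp [hΦX, reesRowMap, reesMap]
  have h₂ : Φ (k, P l i, μ) = (j, θ (P l i) * (P (ψ μ) j)⁻¹, ψ μ) := by
    simp [hΦX, reesRowMap, reesMap]
  exact exists_eq_of_reesMul_hom hrow Φ hΦ h₁ h₂

variable (hrow : ∀ j, P μ j = 1) (hcol : ∀ l, P l k = 1)
  (hhom : IsCSHomogeneous (reesMul P) (reesInv P))
include hrow hcol hhom

theorem IsCSHomogeneous.map_mem_reesEntries {θ : G →* G} (hθ : Function.Injective θ) (l : Λ)
    (i : I) : θ (P l i) ∈ reesEntries P := by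
  obtain ⟨i', h⟩ := hhom.exists_reesEntries_eq hrow hcol hθ (ψ := id) (l := l) (Set.injOn_id _) i k
  simp only [hcol, hrow, id, inv_one, mul_one, one_mul] at h
  exact ⟨l, i', h.symm⟩

theorem IsCSHomogeneous.inv_mem_reesEntries (l : Λ) (i : I) : (P l i)⁻¹ ∈ reesEntries P := by
  classical
  obtain ⟨i', h⟩ := hhom.exists_reesEntries_eq hrow hcol (θ := MonoidHom.id G)
    Function.injective_id (ψ := Equiv.swap l μ) (l := l) (Equiv.injective _).injOn i k
  simp only [Equiv.swap_apply_left, Equiv.swap_apply_right, hcol, hrow, MonoidHom.id_apply,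
    inv_one, mul_one, one_mul] at h
  exact ⟨l, i', by rw [h, inv_inv]⟩

theorem IsCSHomogeneous.mul_mem_reesEntries (l : Λ) (i : I) (m : Λ) (j : I) :
    P l i * P m j ∈ reesEntries P := by
  classical
  rcases eq_or_ne l μ with rfl | hl
  · rw [hrow, one_mul]; exact ⟨m, j, rfl⟩
  rcases eq_or_ne m μ with rfl | hm
  · rw [hrow, mul_one]; exact ⟨l, i, rfl⟩
  obtain ⟨i', h⟩ := hhom.exists_reesEntries_eq hrow hcol (θ := MonoidHom.id G)
    Function.injective_id (ψ := Function.update id m l) (l := m)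
    (by simp [Function.update_of_ne hm.symm, hl]) j i
  simp only [Function.update_self, Function.update_of_ne hm.symm, id, hrow, MonoidHom.id_apply,
    inv_one, mul_one] at h
  exact ⟨l, i', by rw [h, mul_inv_cancel_left]⟩

end Homogeneous

theorem rees_homogeneous_entries_characteristic_general {G I Λ : Type*} [Group G]
    (P : Λ → I → G) (iI : I) (lL : Λ)
    (hrow : ∀ j : I, P lL j = 1) (hcol : ∀ m : Λ, P m iI = 1)
    (hhom : IsCSHomogeneous (reesMul P) (reesInv P)) :
    IsCharacteristicSubgroupSet (reesEntries P) := by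
  refine ⟨⟨lL, iI, hrow iI⟩, ?_, ?_, fun θ => ?_⟩
  · rintro _ ⟨l, i, rfl⟩ _ ⟨m, j, rfl⟩
    exact hhom.mul_mem_reesEntries hrow hcol l i m j
  · rintro _ ⟨l, i, rfl⟩
    exact hhom.inv_mem_reesEntries hrow hcol l i
  · refine Set.Subset.antisymm ?_ fun g hg => ⟨θ.symm g, ?_, θ.apply_symm_apply g⟩
    · rintro _ ⟨_, ⟨l, i, rfl⟩, rfl⟩
      exact hhom.map_mem_reesEntries hrow hcol (θ := θ.toMonoidHom) θ.injective l i
    · obtain ⟨l, i, rfl⟩ := hg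
      exact hhom.map_mem_reesEntries hrow hcol (θ := θ.symm.toMonoidHom) θ.symm.injective l i

/-- If a normalised Rees matrix semigroup `S = M[G;I,Λ;P]` (countable
group, countable index sets) is homogeneous as a completely simple semigroup, then the
entry set `G^P` is a characteristic subgroup of `G`. -/
theorem rees_homogeneous_entries_characteristic {G I Λ : Type*} [Group G] [Countable G]
    [Countable I] [Countable Λ]
    (P : Λ → I → G) (iI : I) (lL : Λ)
    (hrow : ∀ j : I, P lL j = 1) (hcol : ∀ m : Λ, P m iI = 1)
    (hhom : IsCSHomogeneous (reesMul P) (reesInv P)) :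
    IsCharacteristicSubgroupSet (reesEntries P) :=
  rees_homogeneous_entries_characteristic_general P iI lL hrow hcol hhom
end

section
/- Let S be a countable periodic completely simple semigroup. Then S is homogeneous as a semigroup (every isomorphism between finitely generated subsemigroups of S extends to an automorphism of S) if and only if S is homogeneous as a completely simple semigroup (every isomorphism between finitely generated completely simple subsemigroups of S extends to an automorphism of S). -/
section SemigroupDefs

variable {S : Type*} [Semigroup S]

/-- Closure of a subset of a semigroup under multiplication. -/
inductive SgClosure (X : Set S) : S → Prop
  | base {x : S} : x ∈ X → SgClosure X x
  | mul {x y : S} : SgClosure X x → SgClosure X y → SgClosure X (x * y)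

/-- Closure of a subset of a semigroup under multiplication and under the operation
`x ↦ x'` sending an element of a completely simple semigroup to its inverse in the
maximal subgroup containing it, characterised by `x·y·x = x`, `y·x·y = y`, `x·y = y·x`. -/
inductive CSgClosure (X : Set S) : S → Prop
  | base {x : S} : x ∈ X → CSgClosure X x
  | mul {x y : S} : CSgClosure X x → CSgClosure X y → CSgClosure X (x * y)
  | inv {x y : S} : CSgClosure X x → x * y * x = x → y * x * y = y → x * y = y * x →
      CSgClosure X y

end SemigroupDefs

/-- A countable semigroup is homogeneous as a semigroup if every isomorphism between
finitely generated subsemigroups extends to an automorphism. -/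
def IsHomogeneousSemigroup (S : Type*) [Semigroup S] : Prop :=
  ∀ (X Y : Finset S) (φ : S → S),
    Set.BijOn φ {s | SgClosure (X : Set S) s} {s | SgClosure (Y : Set S) s} →
    (∀ x y : S, SgClosure (X : Set S) x → SgClosure (X : Set S) y →
      φ (x * y) = φ x * φ y) →
    ∃ Φ : S → S, Function.Bijective Φ ∧ (∀ x y : S, Φ (x * y) = Φ x * Φ y) ∧
      ∀ x : S, SgClosure (X : Set S) x → Φ x = φ x

/-- A countable completely simple semigroup is homogeneous as a completely simple
semigroup if every isomorphism between finitely generated completely simple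
subsemigroups (subsemigroups closed under `x ↦ x'`) extends to an automorphism. -/
def IsCSHomogeneousSemigroup (S : Type*) [Semigroup S] : Prop :=
  ∀ (X Y : Finset S) (φ : S → S),
    Set.BijOn φ {s | CSgClosure (X : Set S) s} {s | CSgClosure (Y : Set S) s} →
    (∀ x y : S, CSgClosure (X : Set S) x → CSgClosure (X : Set S) y →
      φ (x * y) = φ x * φ y) →
    ∃ Φ : S → S, Function.Bijective Φ ∧ (∀ x y : S, Φ (x * y) = Φ x * Φ y) ∧
      ∀ x : S, CSgClosure (X : Set S) x → Φ x = φ x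

/-- A semigroup is simple if its only two-sided ideal is the whole semigroup. -/
def IsSimpleSemigroup (S : Type*) [Semigroup S] : Prop :=
  ∀ J : Set S, J.Nonempty → (∀ (s x : S), x ∈ J → s * x ∈ J ∧ x * s ∈ J) → J = Set.univ

/-- A semigroup is completely simple if it is simple and contains a primitive
idempotent. -/
def IsCompletelySimple (S : Type*) [Semigroup S] : Prop :=
  IsSimpleSemigroup S ∧
    ∃ e : S, e * e = e ∧ ∀ f : S, f * f = f → e * f = f → f * e = f → f = e

/-!
In a periodic semigroup the inverse `y` of `x` in its maximal subgroup is a positive power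
of `x`: if `x ^ i = x ^ (i + p)` with `p > 0`, then `y = x ^ (2p - 1)`. Hence subsemigroups
and completely simple subsemigroups generated by a set coincide, and the two notions of
homogeneity are literally the same condition.
-/

section Monoid

variable {M : Type*} [Monoid M]

theorem eq_pow_of_pow_eq_pow_add {x y : M} (hxyx : x * y * x = x) (hyxy : y * x * y = y)
    (hc : x * y = y * x) {i p : ℕ} (hp : 0 < p) (h : x ^ i = x ^ (i + p)) :
    y = x ^ (2 * p - 1) := by
  have he : IsIdempotentElem (y * x) := by rw [IsIdempotentElem, ← mul_assoc, hyxy]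
  have hex_pow (n : ℕ) : y * x * x ^ (n + 1) = x ^ (n + 1) := by
    rw [pow_succ', ← mul_assoc, ← hc, hxyx]
  have he_pow : y * x * (y ^ i * x ^ i) = y * x := by
    rw [← (Commute.mul_pow hc.symm i), ← pow_succ', he.pow_succ_eq]
  obtain ⟨q, rfl⟩ := Nat.exists_eq_add_of_lt hp
  rw [zero_add] at h ⊢
  -- Multiply `x ^ i = x ^ (i + p)` on the left by `(y x) y ^ i`, which turns `x ^ i` into `y x`.
  have he_eq : y * x = x ^ (q + 1) :=
    calc y * x = y * x * (y ^ i * x ^ i) * x ^ (q + 1) := by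
          rw [mul_assoc (y * x), mul_assoc (y ^ i), ← pow_add, ← h, he_pow]
      _ = x ^ (q + 1) := by rw [he_pow, hex_pow]
  have hye : y * (y * x) = y := by rw [← hc, ← mul_assoc, hyxy]
  calc y = y * (y * x) * (y * x) := by rw [hye, hye]
    _ = y * (x ^ (q + 1) * x ^ (q + 1)) := by rw [mul_assoc, he_eq]
    _ = y * x * x ^ (2 * q + 1) := by
      rw [← pow_add, show q + 1 + (q + 1) = 2 * q + 1 + 1 by omega, pow_succ', mul_assoc]
    _ = x ^ (2 * (q + 1) - 1) := by rw [hex_pow, show 2 * (q + 1) - 1 = 2 * q + 1 by omega]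

end Monoid

section Semigroup

variable {S : Type*} [Semigroup S]

theorem SgClosure.exists_coe_eq_pow {X : Set S} {x : S} (hx : SgClosure X x) (n : ℕ) :
    ∃ s, SgClosure X s ∧ (s : WithOne S) = (x : WithOne S) ^ (n + 1) := by
  induction n with
  | zero => exact ⟨x, hx, (pow_one _).symm⟩
  | succ n ih =>
    obtain ⟨s, hs, hs_eq⟩ := ih
    exact ⟨s * x, hs.mul hx, by rw [WithOne.coe_mul, hs_eq, ← pow_succ]⟩

theorem exists_coe_pow_eq_pow_add_of_finite {x : S} (hfin : {s | SgClosure {x} s}.Finite) :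
    ∃ i p, 0 < p ∧ (x : WithOne S) ^ i = (x : WithOne S) ^ (i + p) := by
  obtain ⟨m, n, hmn, hpow⟩ := (hfin.image ((↑) : S → WithOne S)).exists_lt_map_eq_of_forall_mem
    (f := fun n => (x : WithOne S) ^ (n + 1)) fun n => by
      obtain ⟨s, hs, hs_eq⟩ := (SgClosure.base rfl : SgClosure {x} x).exists_coe_eq_pow n
      exact ⟨s, hs, hs_eq⟩
  exact ⟨m + 1, n - m, by omega, by rw [hpow, show m + 1 + (n - m) = n + 1 by omega]⟩

theorem SgClosure.of_inverse {X : Set S} {x y : S} (hfin : {s | SgClosure {x} s}.Finite)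
    (hx : SgClosure X x) (hxyx : x * y * x = x) (hyxy : y * x * y = y) (hc : x * y = y * x) :
    SgClosure X y := by
  obtain ⟨i, p, hp, hpow⟩ := exists_coe_pow_eq_pow_add_of_finite hfin
  have hy := eq_pow_of_pow_eq_pow_add (x := (x : WithOne S)) (y := y)
    (mod_cast hxyx) (mod_cast hyxy) (mod_cast hc) hp hpow
  obtain ⟨s, hs, hs_eq⟩ := hx.exists_coe_eq_pow (2 * p - 2)
  have hys : (y : WithOne S) = s := by rw [hy, hs_eq, show 2 * p - 2 + 1 = 2 * p - 1 by omega]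
  rwa [WithOne.coe_injective hys]

theorem cSgClosure_iff_sgClosure (hper : ∀ x : S, {s : S | SgClosure ({x} : Set S) s}.Finite)
    {X : Set S} {s : S} : CSgClosure X s ↔ SgClosure X s := by
  constructor
  · intro h
    induction h with
    | base h => exact .base h
    | mul _ _ ihx ihy => exact ihx.mul ihy
    | inv _ hxyx hyxy hc ih => exact ih.of_inverse (hper _) hxyx hyxy hc
  · intro h
    induction h with
    | base h => exact .base h
    | mul _ _ ihx ihy => exact ihx.mul ihy

end Semigroup

theorem periodic_cs_homogeneous_iff_general {S : Type*} [Semigroup S]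
    (hper : ∀ x : S, {s : S | SgClosure ({x} : Set S) s}.Finite) :
    IsHomogeneousSemigroup S ↔ IsCSHomogeneousSemigroup S := by
  simp only [IsHomogeneousSemigroup, IsCSHomogeneousSemigroup, cSgClosure_iff_sgClosure hper]

/-- A countable periodic completely simple semigroup is homogeneous as
a semigroup if and only if it is homogeneous as a completely simple semigroup. -/
theorem periodic_cs_homogeneous_iff {S : Type*} [Semigroup S] [Countable S]
    (hcs : IsCompletelySimple S)
    (hper : ∀ x : S, {s : S | SgClosure ({x} : Set S) s}.Finite) :
    IsHomogeneousSemigroup S ↔ IsCSHomogeneousSemigroup S :=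
  periodic_cs_homogeneous_iff_general hper
end

section
/- Let S be a countable regular semigroup which is homogeneous as a semigroup. If S is non-periodic (i.e. some element of S generates an infinite subsemigroup), then S is completely simple. -/
/-!
Let `x` have infinite order, `x * v * x = x` and `e = x * v`. Homogeneity first gives
`x ∈ x²S`. Either some power `Z = x ^ (N + 1)` satisfies `Z * e = Z`, and then `Z ∈ Z²S` and an
automorphism carries `Z` to `x`; or no power is fixed by right multiplication by `e`, so `⟨x, e⟩ ≅ ⟨x², e⟩` via
`x ↦ x², e ↦ e`, and the extending automorphism `Θ` gives `e = Θ (x * v) ∈ x²S`.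

Then `y = x * e` has infinite order, lies in `eSe` and is `R`-related to `e`. An automorphism
sending `e` to any idempotent `f` transports such a `y`; if moreover `f ≤ E`, the isomorphism
`⟨y, f⟩ ≅ ⟨y, E⟩` fixing `y` yields `E ∈ yS ⊆ fS`, whence `f = E`. So every idempotent is primitive,
and a regular semigroup with this property is simple.
-/

open Function Set

section Powers

variable {S : Type*} [Semigroup S]

/-- `succPow x n = x ^ (n + 1)`: a semigroup has no `x ^ 0`. -/
def succPow (x : S) : ℕ → S
  | 0 => x
  | n + 1 => succPow x n * x

@[simp] lemma succPow_zero (x : S) : succPow x 0 = x := rfl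

lemma succPow_succ (x : S) (n : ℕ) : succPow x (n + 1) = succPow x n * x := rfl

lemma succPow_mul_succPow (x : S) (m n : ℕ) :
    succPow x m * succPow x n = succPow x (m + n + 1) := by
  induction n with
  | zero => rfl
  | succ n ih => rw [succPow_succ, ← mul_assoc, ih]; rfl

lemma mul_succPow_of_mul_eq {e x : S} (h : e * x = x) (n : ℕ) :
    e * succPow x n = succPow x n := by
  induction n with
  | zero => exact h
  | succ n ih => rw [succPow_succ, ← mul_assoc, ih]

lemma succPow_mul_of_mul_eq {x e : S} (h : x * e = x) (n : ℕ) :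
    succPow x n * e = succPow x n := by
  induction n with
  | zero => exact h
  | succ n ih => rw [succPow_succ, mul_assoc, h]

lemma succPow_succPow (x : S) (m n : ℕ) :
    succPow (succPow x m) n = succPow x ((m + 1) * n + m) := by
  induction n with
  | zero => simp
  | succ n ih => rw [succPow_succ, ih, succPow_mul_succPow]; congr 1; ring

lemma map_succPow {T F : Type*} [Semigroup T] [FunLike F S T] [MulHomClass F S T] (φ : F)
    (x : S) (n : ℕ) : φ (succPow x n) = succPow (φ x) n := by
  induction n with
  | zero => rfl
  | succ n ih => rw [succPow_succ, map_mul, ih, succPow_succ]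

lemma succPow_add_eq_succPow_add {x : S} {i j : ℕ} (h : succPow x i = succPow x j) (k : ℕ) :
    succPow x (i + k) = succPow x (j + k) := by
  induction k with
  | zero => exact h
  | succ k ih => rw [← add_assoc, ← add_assoc, succPow_succ, succPow_succ, ih]

lemma injective_succPow_of_infinite {x : S} (h : (range (succPow x)).Infinite) :
    Injective (succPow x) := by
  suffices key : ∀ i j, i < j → succPow x i ≠ succPow x j by
    intro i j hij
    by_contra hne
    rcases Nat.lt_or_gt_of_ne hne with hlt | hlt
    exacts [key i j hlt hij, key j i hlt hij.symm]
  intro i j hlt hij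
  refine h (((finite_Iio j).image (succPow x)).subset ?_)
  rintro _ ⟨n, rfl⟩
  induction n using Nat.strong_induction_on with
  | _ n ih =>
    rcases lt_or_ge n j with hn | hn
    · exact ⟨n, hn, rfl⟩
    · obtain ⟨k, rfl⟩ := Nat.exists_eq_add_of_le hn
      rw [← succPow_add_eq_succPow_add hij]
      exact ih _ (by omega)

lemma injective_succPow_succPow {x : S} (hx : Injective (succPow x)) (m : ℕ) :
    Injective (succPow (succPow x m)) := by
  intro i j h
  rw [succPow_succPow, succPow_succPow] at h
  have := hx h
  exact Nat.eq_of_mul_eq_mul_left (by omega : 0 < m + 1) (by omega)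

lemma succPow_ne_of_isIdempotentElem {x f : S} (hx : Injective (succPow x))
    (hf : IsIdempotentElem f) (n : ℕ) : succPow x n ≠ f := by
  intro h
  have := @hx (n + n + 1) n (by rw [← succPow_mul_succPow, h, hf.eq])
  omega

lemma succPow_mul_mul_of_mul_eq {e a : S} (h : e * a = a) (n : ℕ) :
    succPow a n * e * a = succPow a (n + 1) := by
  rw [mul_assoc, h, succPow_succ]

lemma succPow_mul_eq_succPow_mul_iff {e a : S} (ha : Injective (succPow a)) (h : e * a = a)
    {m n : ℕ} : succPow a m * e = succPow a n * e ↔ m = n := by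
  refine ⟨fun hmn => ?_, fun hmn => hmn ▸ rfl⟩
  have := @ha (m + 1) (n + 1)
    (by rw [← succPow_mul_mul_of_mul_eq h, hmn, succPow_mul_mul_of_mul_eq h])
  omega

lemma succPow_mul_eq_succPow_mul_of_mul_eq {e a : S} (h : e * a = a) (n : ℕ) :
    succPow (a * e) n = succPow a n * e := by
  induction n with
  | zero => rfl
  | succ n ih => rw [succPow_succ, ih, ← mul_assoc, succPow_mul_mul_of_mul_eq h]

lemma sgClosure_succPow {X : Set S} {x : S} (hx : x ∈ X) (n : ℕ) :
    SgClosure X (succPow x n) := by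
  induction n with
  | zero => exact .base hx
  | succ n ih => exact .mul ih (.base hx)

lemma setOf_sgClosure_eq_range {ι : Type*} {X : Set S} {p : ι → S} (hX : X ⊆ range p)
    (hp : ∀ i, SgClosure X (p i)) (hmul : ∀ i j, ∃ k, p i * p j = p k) :
    {s | SgClosure X s} = range p := by
  ext s
  refine ⟨fun h => ?_, ?_⟩
  · induction h with
    | base hs => exact hX hs
    | mul _ _ iha ihb =>
      obtain ⟨i, rfl⟩ := iha
      obtain ⟨j, rfl⟩ := ihb
      obtain ⟨k, hk⟩ := hmul i j
      exact ⟨k, hk.symm⟩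
  · rintro ⟨i, rfl⟩
    exact hp i

lemma setOf_sgClosure_singleton (x : S) : {s | SgClosure {x} s} = range (succPow x) :=
  setOf_sgClosure_eq_range (by simpa using ⟨0, rfl⟩) (sgClosure_succPow rfl)
    fun m n => ⟨_, succPow_mul_succPow x m n⟩

end Powers

namespace IsHomogeneousSemigroup

variable {S : Type*} [Semigroup S]

/-- `p` and `q` enumerate the two subsemigroups compatibly with multiplication, so that
`q ∘ p⁻¹` is an isomorphism between them. -/
theorem exists_mulEquiv_apply_eq (hS : IsHomogeneousSemigroup S) {ι : Type*} {X Y : Finset S}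
    {p q : ι → S} (hp : Injective p) (hq : Injective q)
    (hpX : {s | SgClosure (X : Set S) s} = range p) (hqY : {s | SgClosure (Y : Set S) s} = range q)
    (hmul : ∀ i j, ∃ k, p i * p j = p k ∧ q i * q j = q k) :
    ∃ Φ : S ≃* S, ∀ i, Φ (p i) = q i := by
  classical
  set φ := extend p q id
  have hφ : ∀ i, φ (p i) = q i := hp.extend_apply q id
  have hbij : BijOn φ {s | SgClosure (X : Set S) s} {s | SgClosure (Y : Set S) s} := by
    rw [hpX, hqY]
    refine ⟨?_, ?_, ?_⟩
    · rintro _ ⟨i, rfl⟩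
      exact ⟨i, (hφ i).symm⟩
    · rintro _ ⟨i, rfl⟩ _ ⟨j, rfl⟩ h
      rw [hφ, hφ] at h
      rw [hq h]
    · rintro _ ⟨i, rfl⟩
      exact ⟨p i, ⟨i, rfl⟩, hφ i⟩
  have hφmul : ∀ a b, SgClosure (X : Set S) a → SgClosure (X : Set S) b →
      φ (a * b) = φ a * φ b := by
    intro a b ha hb
    obtain ⟨i, rfl⟩ : a ∈ range p := hpX ▸ ha
    obtain ⟨j, rfl⟩ : b ∈ range p := hpX ▸ hb
    obtain ⟨k, hpk, hqk⟩ := hmul i j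
    rw [hpk, hφ, hφ, hφ, hqk]
  obtain ⟨Φ, hΦbij, hΦmul, hΦφ⟩ := hS X Y φ hbij hφmul
  refine ⟨MulEquiv.ofBijective (MulHom.mk Φ hΦmul) hΦbij, fun i => ?_⟩
  rw [← hφ]
  exact hΦφ _ (show p i ∈ {s | SgClosure (X : Set S) s} from hpX ▸ ⟨i, rfl⟩)

theorem exists_mulEquiv_apply_eq_of_isIdempotentElem (hS : IsHomogeneousSemigroup S) {e f : S}
    (he : IsIdempotentElem e) (hf : IsIdempotentElem f) : ∃ Φ : S ≃* S, Φ e = f := by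
  have hclosure {g : S} (hg : IsIdempotentElem g) :
      {s | SgClosure (({g} : Finset S) : Set S) s} = range fun _ : Unit => g :=
    setOf_sgClosure_eq_range (by simp) (fun _ => .base (by simp)) fun _ _ => ⟨(), hg⟩
  obtain ⟨Φ, hΦ⟩ := hS.exists_mulEquiv_apply_eq (injective_of_subsingleton _)
    (injective_of_subsingleton _) (hclosure he) (hclosure hf) fun _ _ => ⟨(), he, hf⟩
  exact ⟨Φ, hΦ ()⟩

theorem exists_mulEquiv_apply_eq_of_injective_succPow (hS : IsHomogeneousSemigroup S)
    {x y : S} (hx : Injective (succPow x)) (hy : Injective (succPow y)) :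
    ∃ Φ : S ≃* S, Φ x = y := by
  obtain ⟨Φ, hΦ⟩ := hS.exists_mulEquiv_apply_eq (X := {x}) (Y := {y}) hx hy
    (by simpa using setOf_sgClosure_singleton x) (by simpa using setOf_sgClosure_singleton y)
    fun m n => ⟨_, succPow_mul_succPow x m n, succPow_mul_succPow y m n⟩
  exact ⟨Φ, hΦ 0⟩

end IsHomogeneousSemigroup

section Primitive

variable {S : Type*} [Semigroup S]

def IsPrimitiveIdempotent (e : S) : Prop :=
  IsIdempotentElem e ∧ ∀ f : S, IsIdempotentElem f → e * f = f → f * e = f → f = e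

def IsInfiniteRAssociate (e y : S) : Prop :=
  Injective (succPow y) ∧ e * y = y ∧ y * e = y ∧ ∃ u, y * u = e

lemma optionElim_mul_optionElim {y f : S} (hf : IsIdempotentElem f) (hfy : f * y = y)
    (hyf : y * f = y) (i j : Option ℕ) :
    i.elim f (succPow y) * j.elim f (succPow y) =
      (Option.merge (fun m n => m + n + 1) i j).elim f (succPow y) := by
  rcases i with _ | m <;> rcases j with _ | n
  · exact hf
  · exact mul_succPow_of_mul_eq hfy n
  · exact succPow_mul_of_mul_eq hyf m
  · exact succPow_mul_succPow y m n

lemma injective_optionElim {y f : S} (hy : Injective (succPow y)) (hf : IsIdempotentElem f) :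
    Injective fun o : Option ℕ => o.elim f (succPow y) := by
  rintro (_ | m) (_ | n) h
  · rfl
  · exact absurd h.symm (succPow_ne_of_isIdempotentElem hy hf n)
  · exact absurd h (succPow_ne_of_isIdempotentElem hy hf m)
  · exact congrArg some (hy h)

lemma setOf_sgClosure_pair_eq_range_optionElim [DecidableEq S] {y f : S}
    (hf : IsIdempotentElem f) (hfy : f * y = y) (hyf : y * f = y) :
    {s | SgClosure (({y, f} : Finset S) : Set S) s} =
      range fun o : Option ℕ => o.elim f (succPow y) := by
  refine setOf_sgClosure_eq_range ?_ ?_ fun i j => ⟨_, optionElim_mul_optionElim hf hfy hyf i j⟩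
  · rw [Finset.coe_pair]
    rintro _ (rfl | rfl)
    exacts [⟨some 0, rfl⟩, ⟨none, rfl⟩]
  · rintro (_ | n)
    exacts [.base (by simp), sgClosure_succPow (by simp) n]

namespace IsHomogeneousSemigroup

theorem exists_mulEquiv_fix_apply_eq (hS : IsHomogeneousSemigroup S) {y f E : S}
    (hy : Injective (succPow y)) (hf : IsIdempotentElem f) (hfy : f * y = y) (hyf : y * f = y)
    (hE : IsIdempotentElem E) (hEy : E * y = y) (hyE : y * E = y) :
    ∃ Φ : S ≃* S, Φ y = y ∧ Φ f = E := by
  classical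
  obtain ⟨Φ, hΦ⟩ := hS.exists_mulEquiv_apply_eq (injective_optionElim hy hf)
    (injective_optionElim hy hE) (setOf_sgClosure_pair_eq_range_optionElim hf hfy hyf)
    (setOf_sgClosure_pair_eq_range_optionElim hE hEy hyE) fun i j =>
      ⟨_, optionElim_mul_optionElim hf hfy hyf i j, optionElim_mul_optionElim hE hEy hyE i j⟩
  exact ⟨Φ, hΦ (some 0), hΦ none⟩

theorem eq_of_isInfiniteRAssociate (hS : IsHomogeneousSemigroup S) {f y E : S}
    (hfy : IsInfiniteRAssociate f y) (hf : IsIdempotentElem f) (hE : IsIdempotentElem E)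
    (hEf : E * f = f) (hfE : f * E = f) : f = E := by
  obtain ⟨hy, hfy, hyf, w, hyw⟩ := hfy
  have hEy : E * y = y := by rw [← hfy, ← mul_assoc, hEf]
  have hyE : y * E = y := by rw [← hyf, mul_assoc, hfE]
  obtain ⟨Φ, hΦy, hΦf⟩ := hS.exists_mulEquiv_fix_apply_eq hy hf hfy hyf hE hEy hyE
  have hE_eq : y * Φ w = E := by rw [← hΦf, ← hyw, map_mul, hΦy]
  calc f = f * E := hfE.symm
    _ = E := by rw [← hE_eq, ← mul_assoc, hfy]

theorem exists_isInfiniteRAssociate (hS : IsHomogeneousSemigroup S) {e y f : S}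
    (hey : IsInfiniteRAssociate e y) (he : IsIdempotentElem e) (hf : IsIdempotentElem f) :
    ∃ Y, IsInfiniteRAssociate f Y := by
  obtain ⟨hy, hey, hye, u, hyu⟩ := hey
  obtain ⟨Φ, hΦ⟩ := hS.exists_mulEquiv_apply_eq_of_isIdempotentElem he hf
  refine ⟨Φ y, ?_, ?_, ?_, Φ u, ?_⟩
  · have : succPow (Φ y) = Φ ∘ succPow y := funext fun n => (map_succPow Φ y n).symm
    exact this ▸ Φ.injective.comp hy
  all_goals rw [← hΦ, ← map_mul]
  exacts [congrArg Φ hey, congrArg Φ hye, congrArg Φ hyu]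

theorem isPrimitiveIdempotent (hS : IsHomogeneousSemigroup S) {e y E : S}
    (hey : IsInfiniteRAssociate e y) (he : IsIdempotentElem e) (hE : IsIdempotentElem E) :
    IsPrimitiveIdempotent E := by
  refine ⟨hE, fun f hf hEf hfE => ?_⟩
  obtain ⟨Y, hfY⟩ := hS.exists_isInfiniteRAssociate hey he hf
  exact hS.eq_of_isInfiniteRAssociate hfY hf hE hEf hfE

end IsHomogeneousSemigroup

end Primitive

section LeftIdentity

variable {S : Type*} [Semigroup S]

/-- Enumerates `⟨a, e⟩` when `e` is an idempotent left identity of `a`. -/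
def leftIdPow (a e : S) : ℕ ⊕ Option ℕ → S
  | .inl n => succPow a n
  | .inr none => e
  | .inr (some n) => succPow a n * e

/-- The multiplication of `⟨a, e⟩` read on the indices of `leftIdPow a e`. -/
def leftIdPowMul : ℕ ⊕ Option ℕ → ℕ ⊕ Option ℕ → ℕ ⊕ Option ℕ
  | .inl m, .inl n => .inl (m + n + 1)
  | .inl m, .inr none => .inr (some m)
  | .inl m, .inr (some n) => .inr (some (m + n + 1))
  | .inr none, j => j
  | .inr (some m), .inl n => .inl (m + n + 1)
  | .inr (some m), .inr none => .inr (some m)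
  | .inr (some m), .inr (some n) => .inr (some (m + n + 1))

variable {a e : S}

lemma leftIdPow_mul_leftIdPow (he : IsIdempotentElem e) (hea : e * a = a)
    (i j : ℕ ⊕ Option ℕ) :
    leftIdPow a e i * leftIdPow a e j = leftIdPow a e (leftIdPowMul i j) := by
  rcases i with m | _ | m <;> rcases j with n | _ | n <;> simp only [leftIdPow, leftIdPowMul]
  · exact succPow_mul_succPow a m n
  · rw [← mul_assoc, succPow_mul_succPow]
  · exact mul_succPow_of_mul_eq hea n
  · exact he
  · rw [← mul_assoc, mul_succPow_of_mul_eq hea]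
  · rw [mul_assoc, mul_succPow_of_mul_eq hea, succPow_mul_succPow]
  · rw [mul_assoc, he]
  · rw [mul_assoc, ← mul_assoc e, mul_succPow_of_mul_eq hea, ← mul_assoc, succPow_mul_succPow]

/-- Right multiplication by `a` separates the three kinds of elements, except `a ^ (n + 1)`
from `a ^ (n + 1) * e`, which `hae` keeps apart. -/
lemma injective_leftIdPow (ha : Injective (succPow a)) (he : IsIdempotentElem e)
    (hea : e * a = a) (hae : ∀ n, succPow a n * e ≠ succPow a n) :
    Injective (leftIdPow a e) := by
  have hpow_ne : ∀ n, succPow a n ≠ e := succPow_ne_of_isIdempotentElem ha he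
  have hpowe_ne : ∀ n, succPow a n * e ≠ e := fun n h => by
    have := @ha (n + 1) 0 (by rw [← succPow_mul_mul_of_mul_eq hea, h, hea, succPow_zero])
    omega
  have hpow_ne_powe : ∀ m n, succPow a m ≠ succPow a n * e := fun m n h => by
    obtain rfl : m = n := by
      have := @ha (m + 1) (n + 1) (by rw [succPow_succ, h, succPow_mul_mul_of_mul_eq hea])
      omega
    exact hae m h.symm
  rintro (m | _ | m) (n | _ | n) h <;> simp only [leftIdPow] at h
  · rw [ha h]
  · exact absurd h (hpow_ne m)
  · exact absurd h (hpow_ne_powe m n)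
  · exact absurd h.symm (hpow_ne n)
  · rfl
  · exact absurd h.symm (hpowe_ne n)
  · exact absurd h.symm (hpow_ne_powe n m)
  · exact absurd h (hpowe_ne m)
  · rw [(succPow_mul_eq_succPow_mul_iff ha hea).1 h]

lemma setOf_sgClosure_pair_eq_range_leftIdPow [DecidableEq S] (he : IsIdempotentElem e)
    (hea : e * a = a) :
    {s | SgClosure (({a, e} : Finset S) : Set S) s} = range (leftIdPow a e) := by
  refine setOf_sgClosure_eq_range ?_ ?_ fun i j => ⟨_, leftIdPow_mul_leftIdPow he hea i j⟩
  · rw [Finset.coe_pair]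
    rintro _ (rfl | rfl)
    exacts [⟨.inl 0, rfl⟩, ⟨.inr none, rfl⟩]
  · rintro (n | _ | n)
    · exact sgClosure_succPow (by simp) n
    · exact .base (by simp [leftIdPow])
    · exact .mul (sgClosure_succPow (by simp) n) (.base (by simp))

end LeftIdentity

section Regular

variable {S : Type*} [Semigroup S]

lemma exists_succPow_mul_eq_of_succPow_mul_eq {x v : S} {N : ℕ}
    (hN : succPow x N * (x * v) = succPow x N) (k : ℕ) :
    ∃ t, succPow x (N + k + 1) * t = succPow x N := by
  have hstable : ∀ k, succPow x (N + k) * (x * v) = succPow x (N + k) := by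
    rintro (_ | k)
    · exact hN
    · rw [show N + (k + 1) = k + N + 1 by omega, ← succPow_mul_succPow, mul_assoc, hN]
  induction k with
  | zero => exact ⟨v, by rw [succPow_succ, mul_assoc, hN]⟩
  | succ k ih =>
    obtain ⟨t, ht⟩ := ih
    refine ⟨v * t, ?_⟩
    rw [← ht, succPow_succ, ← mul_assoc, mul_assoc _ x v, hstable (k + 1), ← add_assoc]

namespace IsHomogeneousSemigroup

theorem exists_mul_mul_eq_self_of_succPow_mul_eq (hS : IsHomogeneousSemigroup S) {x v : S}
    {N : ℕ} (hx : Injective (succPow x)) (hN : succPow x N * (x * v) = succPow x N) :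
    ∃ t, x * x * t = x := by
  obtain ⟨t, ht⟩ := exists_succPow_mul_eq_of_succPow_mul_eq hN N
  obtain ⟨Φ, hΦ⟩ :=
    hS.exists_mulEquiv_apply_eq_of_injective_succPow (injective_succPow_succPow hx N) hx
  refine ⟨Φ t, ?_⟩
  rw [← hΦ, ← map_mul, ← map_mul, succPow_mul_succPow, ht]

theorem exists_mul_mul_eq_self_of_forall_succPow_mul_ne (hS : IsHomogeneousSemigroup S)
    {x v : S} (hx : Injective (succPow x)) (hxv : x * v * x = x)
    (hfree : ∀ n, succPow x n * (x * v) ≠ succPow x n) : ∃ t, x * x * t = x := by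
  classical
  have he : IsIdempotentElem (x * v) := by rw [IsIdempotentElem, ← mul_assoc, hxv]
  have hx2 : Injective (succPow (x * x)) := injective_succPow_succPow hx 1
  have hfree2 : ∀ n, succPow (x * x) n * (x * v) ≠ succPow (x * x) n := fun n => by
    rw [show x * x = succPow x 1 from rfl, succPow_succPow]
    exact hfree _
  have hex2 : x * v * (x * x) = x * x := by rw [← mul_assoc, hxv]
  obtain ⟨Θ, hΘ⟩ := hS.exists_mulEquiv_apply_eq (injective_leftIdPow hx he hxv hfree)
    (injective_leftIdPow hx2 he hex2 hfree2) (setOf_sgClosure_pair_eq_range_leftIdPow he hxv)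
    (setOf_sgClosure_pair_eq_range_leftIdPow he hex2) fun i j =>
      ⟨_, leftIdPow_mul_leftIdPow he hxv i j, leftIdPow_mul_leftIdPow he hex2 i j⟩
  have hΘx : Θ x = x * x := hΘ (.inl 0)
  have hΘe : Θ (x * v) = x * v := hΘ (.inr none)
  refine ⟨Θ v * x, ?_⟩
  rw [← mul_assoc, ← hΘx, ← map_mul, hΘe, hxv]

theorem exists_mul_mul_eq_self (hS : IsHomogeneousSemigroup S) {x v : S}
    (hx : Injective (succPow x)) (hxv : x * v * x = x) : ∃ t, x * x * t = x := by
  by_cases h : ∀ n, succPow x n * (x * v) ≠ succPow x n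
  · exact hS.exists_mul_mul_eq_self_of_forall_succPow_mul_ne hx hxv h
  · obtain ⟨N, hN⟩ := not_forall_not.1 h
    exact hS.exists_mul_mul_eq_self_of_succPow_mul_eq hx hN

end IsHomogeneousSemigroup

lemma isInfiniteRAssociate_mul_mul {x v t : S} (hx : Injective (succPow x))
    (hxv : x * v * x = x) (hxt : x * x * t = x) : IsInfiniteRAssociate (x * v) (x * (x * v)) := by
  refine ⟨?_, ?_, ?_, x * t * v, ?_⟩
  · rw [funext (succPow_mul_eq_succPow_mul_of_mul_eq hxv)]
    exact fun _ _ h => (succPow_mul_eq_succPow_mul_iff hx hxv).1 h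
  · rw [← mul_assoc, hxv]
  · rw [mul_assoc, ← mul_assoc (x * v) x v, hxv]
  · calc x * (x * v) * (x * t * v) = x * (x * v * x) * t * v := by simp only [mul_assoc]
      _ = x * v := by rw [hxv, hxt]

end Regular

section Simple

variable {S : Type*} [Semigroup S]

lemma exists_isIdempotentElem_mul_mul_mul (hreg : ∀ a : S, ∃ x, a * x * a = a) {F : S}
    (hF : IsIdempotentElem F) (E : S) :
    ∃ d, IsIdempotentElem (F * E * F * d) ∧ F * (F * E * F * d) = F * E * F * d ∧
      F * E * F * d * F = F * E * F * d := by
  set c := F * E * F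
  have hFc : F * c = c := by simp only [c, ← mul_assoc, hF.eq]
  have hcF : c * F = c := by simp only [c, mul_assoc, hF.eq]
  obtain ⟨c', hc'⟩ := hreg c
  refine ⟨F * c' * F, ?_, ?_, ?_⟩
  · have hcdc : c * (F * c' * F) * c = c :=
      calc c * (F * c' * F) * c = c * F * c' * (F * c) := by simp only [mul_assoc]
        _ = c := by rw [hcF, hFc, hc']
    rw [IsIdempotentElem, ← mul_assoc, hcdc]
  · rw [← mul_assoc, hFc]
  · calc c * (F * c' * F) * F = c * (F * c' * (F * F)) := by simp only [mul_assoc]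
      _ = c * (F * c' * F) := by rw [hF.eq]

theorem isSimpleSemigroup_of_isPrimitiveIdempotent (hreg : ∀ a : S, ∃ x, a * x * a = a)
    (hprim : ∀ e : S, IsIdempotentElem e → IsPrimitiveIdempotent e) : IsSimpleSemigroup S := by
  rintro J ⟨a, haJ⟩ hJ
  obtain ⟨a', ha'⟩ := hreg a
  have hEJ : a * a' ∈ J := (hJ a' a haJ).2
  refine eq_univ_of_forall fun s => ?_
  obtain ⟨s', hs'⟩ := hreg s
  have hF : IsIdempotentElem (s * s') := by rw [IsIdempotentElem, ← mul_assoc, hs']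
  obtain ⟨d, hh, hFh, hhF⟩ := exists_isIdempotentElem_mul_mul_mul hreg hF (a * a')
  have hFJ : s * s' ∈ J := by
    rw [← (hprim _ hF).2 _ hh hFh hhF, mul_assoc, mul_assoc]
    exact (hJ _ _ (hJ _ _ hEJ).2).1
  simpa only [hs'] using (hJ s _ hFJ).2

end Simple

theorem nonperiodic_regular_homogeneous_completely_simple_general {S : Type*} [Semigroup S]
    (hreg : ∀ a : S, ∃ x : S, a * x * a = a)
    (hhom : IsHomogeneousSemigroup S)
    (hnp : ∃ x : S, {s : S | SgClosure ({x} : Set S) s}.Infinite) :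
    IsCompletelySimple S := by
  obtain ⟨x, hx⟩ := hnp
  rw [setOf_sgClosure_singleton] at hx
  replace hx := injective_succPow_of_infinite hx
  obtain ⟨v, hxv⟩ := hreg x
  obtain ⟨t, hxt⟩ := hhom.exists_mul_mul_eq_self hx hxv
  have he : IsIdempotentElem (x * v) := by rw [IsIdempotentElem, ← mul_assoc, hxv]
  have hprim : ∀ E : S, IsIdempotentElem E → IsPrimitiveIdempotent E :=
    fun _ => hhom.isPrimitiveIdempotent (isInfiniteRAssociate_mul_mul hx hxv hxt) he
  exact ⟨isSimpleSemigroup_of_isPrimitiveIdempotent hreg hprim, x * v, hprim _ he⟩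

/-- A countable regular semigroup which is homogeneous as a semigroup
and non-periodic (some element generates an infinite subsemigroup) is completely
simple. -/
theorem nonperiodic_regular_homogeneous_completely_simple {S : Type*} [Semigroup S]
    [Countable S]
    (hreg : ∀ a : S, ∃ x : S, a * x * a = a)
    (hhom : IsHomogeneousSemigroup S)
    (hnp : ∃ x : S, {s : S | SgClosure ({x} : Set S) s}.Infinite) :
    IsCompletelySimple S :=
  nonperiodic_regular_homogeneous_completely_simple_general hreg hhom hnp
end

section
/- Let S be a countable regular semigroup which is homogeneous as a semigroup, and suppose the set of idempotents E(S) is finite and nonempty. Then S is completely simple, and moreover S is homogeneous as a completely simple semigroup. -/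
/-!
Homogeneity makes the automorphism group transitive on idempotents, since any two idempotents
generate isomorphic one-element subsemigroups. An automorphism sending `e` to an idempotent
`f < e` would inject the finite set of idempotents below `e` into a proper subset, so every
idempotent is primitive. Finitely many idempotents, each ideal containing one, give a least
ideal; it is invariant under automorphisms, so it contains every idempotent and, by regularity,
every element. Hence `S` is completely simple.

Every element then has a group inverse `a'`, and `(uv)' = h v' f u' h` where `h`, `f` are the
identities of the groups containing `uv` and `vu`. So the completely simple subsemigroup
generated by a finite `X` is the subsemigroup generated by the finite set `X ∪ X' ∪ E`, with
`E` its idempotents, and homogeneity as a semigroup applies to these generators.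
-/

section Ideals

variable {S : Type*} [Semigroup S]

def IsSemigroupIdeal (J : Set S) : Prop :=
  ∀ s x : S, x ∈ J → s * x ∈ J ∧ x * s ∈ J

/-- `S a S`; for an idempotent `a` this is the principal ideal generated by `a`. -/
def sandwich (a : S) : Set S :=
  {z | ∃ s t : S, s * a * t = z}

lemma isSemigroupIdeal_sandwich (a : S) : IsSemigroupIdeal (sandwich a) := by
  rintro s _ ⟨u, t, rfl⟩
  exact ⟨⟨s * u, t, by simp only [mul_assoc]⟩, ⟨u, t * s, by simp only [mul_assoc]⟩⟩

lemma IsIdempotentElem.mem_sandwich {e : S} (he : IsIdempotentElem e) : e ∈ sandwich e :=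
  ⟨e, e, by rw [he.eq, he.eq]⟩

lemma IsSemigroupIdeal.sandwich_subset {J : Set S} (hJ : IsSemigroupIdeal J) {a : S}
    (ha : a ∈ J) : sandwich a ⊆ J := by
  rintro _ ⟨s, t, rfl⟩
  exact (hJ t _ (hJ s a ha).1).2

lemma IsSemigroupIdeal.preimage {T : Type*} [Semigroup T] (f : S →ₙ* T) {J : Set T}
    (hJ : IsSemigroupIdeal J) : IsSemigroupIdeal (f ⁻¹' J) := by
  intro s x hx
  simp only [Set.mem_preimage, map_mul]
  exact hJ (f s) (f x) hx

lemma isIdempotentElem_mul_of_mul_mul_eq {a x : S} (h : a * x * a = a) :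
    IsIdempotentElem (a * x) := by
  rw [IsIdempotentElem, ← mul_assoc, h]

lemma IsSemigroupIdeal.exists_isIdempotentElem_mem (hreg : ∀ a : S, ∃ x : S, a * x * a = a)
    {J : Set S} (hJ : IsSemigroupIdeal J) (hne : J.Nonempty) :
    ∃ e ∈ J, IsIdempotentElem e := by
  obtain ⟨a, ha⟩ := hne
  obtain ⟨x, hx⟩ := hreg a
  exact ⟨a * x, (hJ x a ha).2, isIdempotentElem_mul_of_mul_mul_eq hx⟩

/-- Minimality of `sandwich e` among the finitely many idempotent-generated principal ideals
makes it the least ideal: `sandwich e ∩ sandwich g` contains an idempotent generating a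
smaller one. -/
lemma exists_isIdempotentElem_sandwich_subset_ideal (hreg : ∀ a : S, ∃ x : S, a * x * a = a)
    (hEfin : {e : S | IsIdempotentElem e}.Finite)
    (hEne : {e : S | IsIdempotentElem e}.Nonempty) :
    ∃ e : S, IsIdempotentElem e ∧
      ∀ J : Set S, J.Nonempty → IsSemigroupIdeal J → sandwich e ⊆ J := by
  obtain ⟨e, he, hmin⟩ := hEfin.exists_minimalFor sandwich _ hEne
  refine ⟨e, he, fun J hJne hJ => ?_⟩
  obtain ⟨g, hgJ, hg⟩ := hJ.exists_isIdempotentElem_mem hreg hJne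
  obtain ⟨x, hx⟩ := hreg (e * g)
  have hkE : e * g * x ∈ sandwich e :=
    (isSemigroupIdeal_sandwich e x _ ⟨e, g, by rw [he.eq]⟩).2
  have hkG : e * g * x ∈ sandwich g :=
    (isSemigroupIdeal_sandwich g x _ ⟨e, g, by rw [mul_assoc, hg.eq]⟩).2
  calc sandwich e
      ⊆ sandwich (e * g * x) :=
        hmin (isIdempotentElem_mul_of_mul_mul_eq hx)
          ((isSemigroupIdeal_sandwich e).sandwich_subset hkE)
    _ ⊆ sandwich g := (isSemigroupIdeal_sandwich g).sandwich_subset hkG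
    _ ⊆ J := hJ.sandwich_subset hgJ

end Ideals

section Simple

variable {S : Type*} [Semigroup S]

/-- The least ideal `sandwich e` is invariant under automorphisms, so it contains every
idempotent once these form a single orbit; by regularity `b = (b y) b` then lies in it too. -/
theorem isSimpleSemigroup_of_forall_exists_mulEquiv (hreg : ∀ a : S, ∃ x : S, a * x * a = a)
    (hEfin : {e : S | IsIdempotentElem e}.Finite)
    (htrans : ∀ e f : S, IsIdempotentElem e → IsIdempotentElem f →
      ∃ Φ : S ≃* S, Φ e = f) :
    IsSimpleSemigroup S := by
  intro J hJne hJ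
  obtain ⟨g, -, hg⟩ := IsSemigroupIdeal.exists_isIdempotentElem_mem hreg hJ hJne
  obtain ⟨e, he, hleast⟩ := exists_isIdempotentElem_sandwich_subset_ideal hreg hEfin ⟨g, hg⟩
  have hE : ∀ f : S, IsIdempotentElem f → f ∈ sandwich e := by
    intro f hf
    obtain ⟨Φ, rfl⟩ := htrans e f he hf
    exact hleast (Φ ⁻¹' sandwich e) ⟨Φ.symm e, by simpa using he.mem_sandwich⟩
      ((isSemigroupIdeal_sandwich e).preimage Φ.toMulHom) he.mem_sandwich
  refine Set.eq_univ_of_forall fun b => hleast J hJne hJ ?_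
  obtain ⟨y, hy⟩ := hreg b
  simpa only [hy] using
    (isSemigroupIdeal_sandwich e b _ (hE _ (isIdempotentElem_mul_of_mul_mul_eq hy))).2

lemma IsSimpleSemigroup.exists_mul_mul_eq (hsimp : IsSimpleSemigroup S) (a b : S) :
    ∃ s t : S, s * a * t = b := by
  have : sandwich a = Set.univ :=
    hsimp _ ⟨a * a * a, a, a, rfl⟩ (isSemigroupIdeal_sandwich a)
  exact Set.eq_univ_iff_forall.mp this b

end Simple

section Homogeneous

variable {S : Type*} [Semigroup S]

lemma sgClosure_singleton_iff {e : S} (he : IsIdempotentElem e) {s : S} :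
    SgClosure ({e} : Set S) s ↔ s = e := by
  refine ⟨fun h => ?_, fun h => SgClosure.base h⟩
  induction h with
  | base hx => exact hx
  | mul _ _ ihx ihy => rw [ihx, ihy, he.eq]

lemma IsHomogeneousSemigroup.exists_mulEquiv_apply_eq_s19 (hhom : IsHomogeneousSemigroup S)
    {e f : S} (he : IsIdempotentElem e) (hf : IsIdempotentElem f) :
    ∃ Φ : S ≃* S, Φ e = f := by
  have hclosure : ∀ {g : S}, IsIdempotentElem g →
      {s | SgClosure (({g} : Finset S) : Set S) s} = {g} := fun hg => by
    ext s
    simp [sgClosure_singleton_iff hg]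
  obtain ⟨Φ, hbij, hmul, hext⟩ := hhom {e} {f} (fun _ => f)
    (by rw [hclosure he, hclosure hf]; exact Set.bijOn_singleton.mpr rfl)
    (fun _ _ _ _ => hf.eq.symm)
  exact ⟨MulEquiv.ofBijective (MulHom.mk Φ hmul) hbij,
    hext e (SgClosure.base (Finset.mem_coe.mpr (Finset.mem_singleton_self e)))⟩

def IdempotentsPrimitive (S : Type*) [Semigroup S] : Prop :=
  ∀ ⦃e f : S⦄, IsIdempotentElem e → IsIdempotentElem f → e * f = f → f * e = f → f = e

/-- An automorphism `Φ` with `Φ e = f ≤ e` maps the finite set of idempotents below `e`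
injectively into itself, hence onto it; so `e = Φ g` lies below `Φ e = f`, forcing `f = e`. -/
theorem IsHomogeneousSemigroup.idempotentsPrimitive (hhom : IsHomogeneousSemigroup S)
    (hEfin : {e : S | IsIdempotentElem e}.Finite) : IdempotentsPrimitive S := by
  intro e f he hf hef hfe
  obtain ⟨Φ, rfl⟩ := hhom.exists_mulEquiv_apply_eq_s19 he hf
  set below : Set S := {g | IsIdempotentElem g ∧ e * g = g ∧ g * e = g}
  have hmaps : Set.MapsTo Φ below below := by
    rintro g ⟨hg, h1, h2⟩
    refine ⟨by rw [IsIdempotentElem, ← map_mul, hg.eq], ?_, ?_⟩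
    · rw [← h1, map_mul, ← mul_assoc, hef]
    · rw [← h2, map_mul, mul_assoc, hfe]
  have hbij := ((hEfin.subset fun g hg => hg.1).injOn_iff_bijOn_of_mapsTo hmaps).mp
    Φ.injective.injOn
  obtain ⟨g, ⟨-, -, hge⟩, hΦg⟩ := hbij.surjOn ⟨he, he.eq, he.eq⟩
  calc Φ e = e * Φ e := hef.symm
    _ = Φ g * Φ e := by rw [hΦg]
    _ = e := by rw [← map_mul, hge, hΦg]

end Homogeneous

section GroupInverse

variable {S : Type*} [Semigroup S]

structure IsGroupInverse (a y : S) : Prop where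
  mul_inv_mul : a * y * a = a
  inv_mul_inv : y * a * y = y
  commute : a * y = y * a

lemma IsGroupInverse.unique {a y z : S} (hy : IsGroupInverse a y) (hz : IsGroupInverse a z) :
    y = z := by
  have hyz : a * y = a * z :=
    calc a * y = y * (a * z * a) := by rw [hy.commute, hz.mul_inv_mul]
      _ = y * a * (z * a) := by simp only [mul_assoc]
      _ = a * y * a * z := by rw [← hy.commute, ← hz.commute]; simp only [mul_assoc]
      _ = a * z := by rw [hy.mul_inv_mul]
  calc y = y * (a * y) := by rw [← mul_assoc, hy.inv_mul_inv]
    _ = y * (a * z) := by rw [hyz]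
    _ = a * y * z := by rw [← mul_assoc, ← hy.commute]
    _ = z := by rw [hyz, hz.commute, hz.inv_mul_inv]

lemma IsGroupInverse.of_isIdempotentElem {e : S} (he : IsIdempotentElem e) :
    IsGroupInverse e e :=
  ⟨by rw [he.eq, he.eq], by rw [he.eq, he.eq], rfl⟩

lemma IsGroupInverse.symm {a y : S} (h : IsGroupInverse a y) : IsGroupInverse y a :=
  ⟨h.inv_mul_inv, h.mul_inv_mul, h.commute.symm⟩

variable (hsimp : IsSimpleSemigroup S) (hprim : IdempotentsPrimitive S)
include hsimp hprim

/-- In `e S e` the element `a` has a right inverse: pick `s a t = e` by simplicity and cut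
`s`, `t` down to the corner; then `a (t s)` is an idempotent below `e`, hence equal to `e`. -/
lemma exists_mul_eq_of_mem_corner {e a : S} (he : IsIdempotentElem e) (hea : e * a = a)
    (hae : a * e = a) : ∃ r : S, a * r = e ∧ e * r = r ∧ r * e = r := by
  obtain ⟨s, t, hst⟩ := hsimp.exists_mul_mul_eq a e
  set s' := e * s * e
  set t' := e * t * e
  have hs'e : s' * e = s' := by simp only [s', mul_assoc, he.eq]
  have hes' : e * s' = s' := by simp only [s', ← mul_assoc, he.eq]
  have het' : e * t' = t' := by simp only [t', ← mul_assoc, he.eq]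
  have hkey : s' * a * t' = e :=
    calc s' * a * t' = e * (s * (e * a * e) * t) * e := by simp only [s', t', mul_assoc]
      _ = e := by rw [hea, hae, hst, he.eq, he.eq]
  have hidem : IsIdempotentElem (a * (t' * s')) :=
    calc a * (t' * s') * (a * (t' * s')) = a * t' * (s' * a * t') * s' := by
          simp only [mul_assoc]
      _ = a * (t' * s') := by rw [hkey, mul_assoc (a * t') e, hes', mul_assoc]
  have hfe : a * (t' * s') = e := hprim he hidem (by rw [← mul_assoc, hea])
    (by rw [mul_assoc, mul_assoc, hs'e])
  exact ⟨t' * s', hfe, by rw [← mul_assoc, het'], by rw [mul_assoc, hs'e]⟩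

lemma exists_inverse_of_mem_corner {e a : S} (he : IsIdempotentElem e) (hea : e * a = a)
    (hae : a * e = a) : ∃ b : S, a * b = e ∧ b * a = e ∧ e * b = b ∧ b * e = b := by
  obtain ⟨r, har, her, hre⟩ := exists_mul_eq_of_mem_corner hsimp hprim he hea hae
  obtain ⟨s, hrs, -, -⟩ := exists_mul_eq_of_mem_corner hsimp hprim he her hre
  have hra : r * a = e :=
    calc r * a = r * (a * (r * s)) := by rw [hrs, hae]
      _ = e := by rw [← mul_assoc a, har, ← mul_assoc, hre, hrs]
  exact ⟨r, har, hra, her, hre⟩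

/-- With `a x a = a`, the element `a (a x)` has an inverse `c` in the corner of `a x`; then
`c a` is an idempotent fixing `a` on both sides, and `a`'s inverse in its corner is the
group inverse. -/
lemma exists_isGroupInverse (hreg : ∀ a : S, ∃ x : S, a * x * a = a) (a : S) :
    ∃ y : S, IsGroupInverse a y := by
  obtain ⟨x, hx⟩ := hreg a
  set e := a * x
  have he : IsIdempotentElem e := isIdempotentElem_mul_of_mul_mul_eq hx
  have hea : e * a = a := hx
  obtain ⟨c, hbc, hcb, hec, hce⟩ := exists_inverse_of_mem_corner hsimp hprim (a := a * e) he
    (by rw [← mul_assoc, hea]) (by rw [mul_assoc, he.eq])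
  have hac : a * c = e := by rw [← hec, ← mul_assoc, hbc]
  have hh : IsIdempotentElem (c * a) := by
    rw [IsIdempotentElem, mul_assoc, ← mul_assoc a, hac, ← mul_assoc, hce]
  have hah : a * (c * a) = a := by rw [← mul_assoc, hac, hea]
  have hha : c * a * a = a :=
    calc c * a * a = c * a * (e * a) := by rw [hea]
      _ = c * (a * e) * a := by simp only [mul_assoc]
      _ = a := by rw [hcb, hea]
  obtain ⟨d, had, hda, hhd, -⟩ := exists_inverse_of_mem_corner hsimp hprim hh hha hah
  exact ⟨d, by rw [had, hha], by rw [hda, hhd], by rw [had, hda]⟩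

end GroupInverse

section CompletelySimple

variable {S : Type*} [Semigroup S] (hprim : IdempotentsPrimitive S)

include hprim in
lemma IdempotentsPrimitive.mul_eq_right_symm {e f : S} (he : IsIdempotentElem e)
    (hf : IsIdempotentElem f) (h : e * f = f) : f * e = e := by
  refine hprim he ?_ (by rw [← mul_assoc, h]) (by rw [mul_assoc, he.eq])
  rw [IsIdempotentElem, mul_assoc, ← mul_assoc e, h, ← mul_assoc, hf.eq]

include hprim in
lemma IdempotentsPrimitive.mul_eq_left_symm {e f : S} (he : IsIdempotentElem e)
    (hf : IsIdempotentElem f) (h : f * e = f) : e * f = e := by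
  refine hprim he ?_ (by rw [← mul_assoc, he.eq]) (by rw [mul_assoc, h])
  rw [IsIdempotentElem, mul_assoc, ← mul_assoc f, h, hf.eq]

variable {iv : S → S} (hiv : ∀ a : S, IsGroupInverse a (iv a))
include hiv

lemma isIdempotentElem_mul_iv (a : S) : IsIdempotentElem (a * iv a) := by
  rw [IsIdempotentElem, ← mul_assoc, (hiv a).mul_inv_mul]

lemma mul_iv_mul_mul_iv_mul (a b : S) :
    a * iv a * (a * b * iv (a * b)) = a * b * iv (a * b) := by
  simp only [← mul_assoc]
  rw [(hiv a).mul_inv_mul]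

lemma mul_iv_mul_mul_iv_mul_self (a b : S) :
    a * b * iv (a * b) * (iv b * b) = a * b * iv (a * b) := by
  rw [(hiv (a * b)).commute]
  simp only [mul_assoc]
  rw [← mul_assoc b, (hiv b).mul_inv_mul]

include hprim in
lemma mul_iv_mul_mul_self (a b : S) : a * b * iv (a * b) * a = a :=
  calc a * b * iv (a * b) * a = a * b * iv (a * b) * (a * iv a) * a := by
        rw [mul_assoc _ (a * iv a), (hiv a).mul_inv_mul]
    _ = a := by
        rw [hprim.mul_eq_right_symm (isIdempotentElem_mul_iv hiv a)
          (isIdempotentElem_mul_iv hiv _) (mul_iv_mul_mul_iv_mul hiv a b), (hiv a).mul_inv_mul]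

include hprim in
lemma mul_mul_iv_mul_mul (a b : S) : b * (a * b * iv (a * b)) = b :=
  calc b * (a * b * iv (a * b)) = b * (iv b * b * (a * b * iv (a * b))) := by
        rw [← mul_assoc b (iv b * b), ← mul_assoc b (iv b) b, (hiv b).mul_inv_mul]
    _ = b := by
        have hb : IsIdempotentElem (iv b * b) := by
          rw [← (hiv b).commute]; exact isIdempotentElem_mul_iv hiv b
        rw [hprim.mul_eq_left_symm hb (isIdempotentElem_mul_iv hiv _)
          (mul_iv_mul_mul_iv_mul_self hiv a b), ← mul_assoc, (hiv b).mul_inv_mul]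

include hprim in
/-- In Rees coordinates `h` and `f` are the identities of the groups `H_{uv}` and `H_{vu}`. -/
lemma iv_mul (u v : S) :
    iv (u * v) =
      u * v * iv (u * v) * iv v * (v * u * iv (v * u)) * iv u * (u * v * iv (u * v)) := by
  set h := u * v * iv (u * v)
  set f := v * u * iv (v * u)
  have hleft : u * v * (h * iv v * f * iv u * h) = h :=
    calc u * v * (h * iv v * f * iv u * h) = u * (v * h) * iv v * f * iv u * h := by
          simp only [mul_assoc]
      _ = u * (v * iv v * f) * iv u * h := by
          rw [mul_mul_iv_mul_mul hprim hiv]; simp only [mul_assoc]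
      _ = u * f * iv u * h := by rw [mul_iv_mul_mul_iv_mul hiv]
      _ = h := by rw [mul_mul_iv_mul_mul hprim hiv, mul_iv_mul_mul_iv_mul hiv]
  have hright : h * iv v * f * iv u * h * (u * v) = h :=
    calc h * iv v * f * iv u * h * (u * v) = h * iv v * (f * (iv u * (h * u))) * v := by
          simp only [mul_assoc]
      _ = h * iv v * (f * v) := by
          rw [mul_iv_mul_mul_self hprim hiv, mul_iv_mul_mul_iv_mul_self hiv, mul_assoc]
      _ = h := by rw [mul_iv_mul_mul_self hprim hiv, mul_assoc, mul_iv_mul_mul_iv_mul_self hiv]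
  refine (hiv (u * v)).unique ⟨?_, ?_, hleft.trans hright.symm⟩
  · rw [hleft, ← mul_assoc, mul_iv_mul_mul_self hprim hiv]
  · rw [hright]
    simp only [← mul_assoc]
    rw [(isIdempotentElem_mul_iv hiv (u * v)).eq]

end CompletelySimple

section Closure

variable {S : Type*} [Semigroup S] {iv : S → S}

def csGenerators (iv : S → S) (X : Set S) : Set S :=
  X ∪ iv '' X ∪ {e | IsIdempotentElem e ∧ CSgClosure X e}

lemma CSgClosure.of_isGroupInverse {X : Set S} {a y : S} (ha : CSgClosure X a)
    (hy : IsGroupInverse a y) : CSgClosure X y :=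
  ha.inv hy.mul_inv_mul hy.inv_mul_inv hy.commute

lemma CSgClosure.of_sgClosure_csGenerators (hiv : ∀ a : S, IsGroupInverse a (iv a))
    {X : Set S} {s : S} (hs : SgClosure (csGenerators iv X) s) : CSgClosure X s := by
  induction hs with
  | base hx =>
    rcases hx with (hx | ⟨x, hx, rfl⟩) | hx
    · exact CSgClosure.base hx
    · exact (CSgClosure.base hx).of_isGroupInverse (hiv x)
    · exact hx.2
  | mul _ _ ihx ihy => exact ihx.mul ihy

lemma SgClosure.iv_of_csGenerators (hprim : IdempotentsPrimitive S)
    (hiv : ∀ a : S, IsGroupInverse a (iv a)) {X : Set S} {s : S}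
    (hs : SgClosure (csGenerators iv X) s) : SgClosure (csGenerators iv X) (iv s) := by
  have hidem : ∀ {a : S}, SgClosure (csGenerators iv X) a →
      SgClosure (csGenerators iv X) (a * iv a) := fun ha =>
    SgClosure.base (Or.inr ⟨isIdempotentElem_mul_iv hiv _,
      (CSgClosure.of_sgClosure_csGenerators hiv ha).mul
        ((CSgClosure.of_sgClosure_csGenerators hiv ha).of_isGroupInverse (hiv _))⟩)
  induction hs with
  | base hx =>
    rcases hx with (hx | ⟨x, hx, rfl⟩) | hx
    · exact SgClosure.base (Or.inl (Or.inr ⟨_, hx, rfl⟩))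
    · rw [(hiv (iv x)).unique (hiv x).symm]
      exact SgClosure.base (Or.inl (Or.inl hx))
    · rw [(hiv _).unique (IsGroupInverse.of_isIdempotentElem hx.1)]
      exact SgClosure.base (Or.inr hx)
  | mul hx hy ihx ihy =>
    rw [iv_mul hprim hiv]
    exact ((((hidem (hx.mul hy)).mul ihy).mul (hidem (hy.mul hx))).mul ihx).mul
      (hidem (hx.mul hy))

lemma sgClosure_csGenerators_iff (hprim : IdempotentsPrimitive S)
    (hiv : ∀ a : S, IsGroupInverse a (iv a)) {X : Set S} {s : S} :
    SgClosure (csGenerators iv X) s ↔ CSgClosure X s := by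
  refine ⟨CSgClosure.of_sgClosure_csGenerators hiv, fun hs => ?_⟩
  induction hs with
  | base hx => exact SgClosure.base (Or.inl (Or.inl hx))
  | mul _ _ ihx ihy => exact ihx.mul ihy
  | inv _ h₁ h₂ h₃ ih =>
    rw [IsGroupInverse.unique ⟨h₁, h₂, h₃⟩ (hiv _)]
    exact ih.iv_of_csGenerators hprim hiv

lemma csGenerators_finite (hEfin : {e : S | IsIdempotentElem e}.Finite) {X : Set S}
    (hX : X.Finite) : (csGenerators iv X).Finite :=
  (hX.union (hX.image iv)).union (hEfin.subset fun _ he => he.1)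

theorem IsHomogeneousSemigroup.isCSHomogeneousSemigroup (hhom : IsHomogeneousSemigroup S)
    (hEfin : {e : S | IsIdempotentElem e}.Finite) (hprim : IdempotentsPrimitive S)
    (hiv : ∀ a : S, IsGroupInverse a (iv a)) : IsCSHomogeneousSemigroup S := by
  intro X Y φ hbij hmul
  let gen (Z : Finset S) : Finset S :=
    (csGenerators_finite (iv := iv) hEfin Z.finite_toSet).toFinset
  have hgen : ∀ (Z : Finset S) (s : S),
      SgClosure (gen Z : Set S) s ↔ CSgClosure (Z : Set S) s :=
    fun Z s => by
      simp only [gen, Set.Finite.coe_toFinset]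
      exact sgClosure_csGenerators_iff hprim hiv
  obtain ⟨Φ, hΦbij, hΦmul, hΦext⟩ := hhom (gen X) (gen Y) φ
    (by rwa [Set.ext (hgen X), Set.ext (hgen Y)])
    (fun x y hx hy => hmul x y ((hgen X x).mp hx) ((hgen X y).mp hy))
  exact ⟨Φ, hΦbij, hΦmul, fun x hx => hΦext x ((hgen X x).mpr hx)⟩

end Closure

theorem regular_homogeneous_finite_idempotents_general {S : Type*} [Semigroup S]
    (hreg : ∀ a : S, ∃ x : S, a * x * a = a)
    (hhom : IsHomogeneousSemigroup S)
    (hEfin : {e : S | e * e = e}.Finite)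
    (hEne : {e : S | e * e = e}.Nonempty) :
    IsCompletelySimple S ∧ IsCSHomogeneousSemigroup S := by
  have hprim : IdempotentsPrimitive S := hhom.idempotentsPrimitive hEfin
  have hsimp : IsSimpleSemigroup S := isSimpleSemigroup_of_forall_exists_mulEquiv hreg hEfin
    fun _ _ => hhom.exists_mulEquiv_apply_eq_s19
  choose iv hiv using exists_isGroupInverse hsimp hprim hreg
  obtain ⟨e, he⟩ := hEne
  exact ⟨⟨hsimp, e, he, fun _ hf => hprim he hf⟩,
    hhom.isCSHomogeneousSemigroup hEfin hprim hiv⟩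

/-- A countable regular semigroup which is homogeneous as a semigroup
and has a finite nonempty set of idempotents is completely simple, and moreover is
homogeneous as a completely simple semigroup. -/
theorem regular_homogeneous_finite_idempotents {S : Type*} [Semigroup S] [Countable S]
    (hreg : ∀ a : S, ∃ x : S, a * x * a = a)
    (hhom : IsHomogeneousSemigroup S)
    (hEfin : {e : S | e * e = e}.Finite)
    (hEne : {e : S | e * e = e}.Nonempty) :
    IsCompletelySimple S ∧ IsCSHomogeneousSemigroup S :=
  regular_homogeneous_finite_idempotents_general hreg hhom hEfin hEne
end
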